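/- arXiv:2110.08738 — 4 statements merged into one kernel-verified Lean document; each statement's English description precedes it below -/
import Mathlib

section
/- g(F_n) = n̄ for every integer n ≥ 0, and g(C_n) = n̄ ⊕ 1 for every integer n ≥ 1. -/
/-- A decoration of a graph `G`: a set of arrows drawn on edges of `G`,
at most one per edge. -/
def IsDecoration {V : Type*} (G : SimpleGraph V) (X : Finset (V × V)) : Prop :=
  (∀ p ∈ X, G.Adj p.1 p.2) ∧ (∀ p ∈ X, Prod.swap p ∉ X)

/-- `w` is a sink of the decoration `X`. -/
def IsSink {V : Type*} (G : SimpleGraph V) (X : Finset (V × V)) (w : V) : Prop :=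
  ∀ v, G.Adj v w → (v, w) ∈ X

/-- `v` is a source of the decoration `X`. -/
def IsSource {V : Type*} (G : SimpleGraph V) (X : Finset (V × V)) (v : V) : Prop :=
  ∀ w, G.Adj v w → (v, w) ∈ X

/-- A leaf is a vertex of degree one. -/
def IsLeaf {V : Type*} (G : SimpleGraph V) (v : V) : Prop :=
  ∃! w, G.Adj v w

/-- A state: a decoration with no sinks or sources at internal (non-leaf) vertices. -/
def IsState {V : Type*} (G : SimpleGraph V) (X : Finset (V × V)) : Prop :=
  IsDecoration G X ∧ ∀ v, ¬ IsLeaf G v → ¬ IsSink G X v ∧ ¬ IsSource G X v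

/-- `X'` is a follower of the state `X`: a state obtained from `X` by adding one arrow. -/
def Follower {V : Type*} [DecidableEq V] (G : SimpleGraph V)
    (X X' : Finset (V × V)) : Prop :=
  IsState G X ∧ IsState G X' ∧ ∃ p, p ∉ X ∧ X' = insert p X

/-- The Sprague–Grundy value of a state: the minimum excludant of the Grundy values
of its followers. -/
noncomputable def grundy {V : Type*} [Fintype V] [DecidableEq V] (G : SimpleGraph V)
    (X : Finset (V × V)) : ℕ :=
  sInf {n : ℕ | ∀ X' : Finset (V × V), Follower G X X' → grundy G X' ≠ n}
termination_by Fintype.card (V × V) - X.card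
decreasing_by
  rename_i X' hX'
  obtain ⟨-, -, p, hp, rfl⟩ := hX'
  have h1 : (insert p X).card = X.card + 1 := Finset.card_insert_of_notMem hp
  have h2 : (insert p X).card ≤ Fintype.card (V × V) := Finset.card_le_univ _
  omega

/-- The path graph `P_n` with vertex set `{0, 1, …, n-1}` and edges between
consecutive vertices. -/
def PathG (n : ℕ) : SimpleGraph (Fin n) :=
  SimpleGraph.fromRel (fun i j => i.val + 1 = j.val)

/-- The `n`-flow state `F_n` of the path graph with vertices `-1, 0, …, n, n+1`
(re-indexed here as `0, 1, …, n+2`): the two arrows `(-1,0)` and `(n,n+1)` point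
in the same direction along the path, leaving `n` unmarked edges between them. -/
def flowState (n : ℕ) : Finset (Fin (n + 3) × Fin (n + 3)) :=
  {(⟨0, by omega⟩, ⟨1, by omega⟩), (⟨n + 1, by omega⟩, ⟨n + 2, by omega⟩)}

/-- The `n`-crash state `C_n` of the path graph with vertices `-1, 0, …, n, n+1`
(re-indexed here as `0, 1, …, n+2`): the two arrows `(-1,0)` and `(n+1,n)` point
toward each other, leaving `n` unmarked edges between them. -/
def crashState (n : ℕ) : Finset (Fin (n + 3) × Fin (n + 3)) :=
  {(⟨0, by omega⟩, ⟨1, by omega⟩), (⟨n + 2, by omega⟩, ⟨n + 1, by omega⟩)}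

/-- The `n`-twig state `T_n` of the path graph with vertices `0, 1, …, n+1`:
a single arrow `(n, n+1)` on the last edge, pointing outward. -/
def twigState (n : ℕ) : Finset (Fin (n + 2) × Fin (n + 2)) :=
  {(⟨n, by omega⟩, ⟨n + 1, by omega⟩)}

/-!
Encode a decoration of a path by the orientations of its edges, `none` for an unmarked edge.
It is a state exactly when any two adjacent marked edges point the same way. A move marks one
edge, so if both end edges are marked, every move lowers the number `U` of unmarked edges by one
and keeps the ends; by induction all followers have the same value, and
`g = (U + [the end edges point differently]) mod 2` follows once it holds at terminal states.
In a terminal state every unmarked edge lies between two marked edges pointing in opposite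
directions, and these are the only places where the orientation changes along the path; so `U`
is the number of changes, whose parity is that of `[the end edges point differently]`.
-/

open Finset Function

section Grundy

variable {V : Type*} [Fintype V] [DecidableEq V] {G : SimpleGraph V} {X : Finset (V × V)}

theorem grundy_eq_zero_of_forall_follower (h : ∀ X', Follower G X X' → grundy G X' ≠ 0) :
    grundy G X = 0 := by
  rw [grundy]
  exact Nat.sInf_eq_zero.mpr (Or.inl h)

theorem grundy_eq_one_of_exists_follower (hex : ∃ X', Follower G X X' ∧ grundy G X' = 0)
    (h : ∀ X', Follower G X X' → grundy G X' ≠ 1) : grundy G X = 1 := by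
  rw [grundy]
  obtain ⟨X', hX', h0⟩ := hex
  refine le_antisymm (Nat.sInf_le h) (Nat.one_le_iff_ne_zero.mpr fun h' => ?_)
  rcases Nat.sInf_eq_zero.mp h' with h0' | hempty
  · exact h0' X' hX' h0
  · exact (Set.eq_empty_iff_forall_notMem.mp hempty 1) h

end Grundy

theorem card_filter_range_succ' (p : ℕ → Prop) [DecidablePred p] (k : ℕ) :
    #{i ∈ range (k + 1) | p i} = #{i ∈ range k | p (i + 1)} + if p 0 then 1 else 0 := by
  simp only [card_filter, sum_range_succ']

theorem card_filter_update_some_add_one {d : ℕ → Option Bool} {i k : ℕ} (hik : i < k)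
    (hi : d i = none) (b : Bool) :
    #{j ∈ range k | update d i (some b) j = none} + 1 = #{j ∈ range k | d j = none} := by
  have hset : {j ∈ range k | update d i (some b) j = none} =
      {j ∈ range k | d j = none}.erase i := by
    ext j
    rcases eq_or_ne j i with rfl | hj
    · simp
    · simp [hj]
  rw [hset, card_erase_add_one (by simpa using ⟨hik, hi⟩)]

/-- `d i` is the orientation of the `i`-th edge of a path, `none` if the edge is unmarked. -/
def IsCoherent (d : ℕ → Option Bool) : Prop :=
  ∀ i b, d i = some b → d (i + 1) ≠ some !b

namespace IsCoherent

variable {d : ℕ → Option Bool}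

theorem eq_of_succ (hd : IsCoherent d) {i : ℕ} {a b : Bool} (ha : d i = some a)
    (hb : d (i + 1) = some b) : a = b := by
  cases a <;> cases b <;> first | rfl | exact absurd hb (hd i _ ha)

theorem update_some (hd : IsCoherent d) {i : ℕ} {b : Bool} (hl : ∀ a, d i = some a → a = b)
    (hr : ∀ a, d (i + 2) = some a → a = b) : IsCoherent (update d (i + 1) (some b)) := by
  intro j c hj hj1
  rcases lt_trichotomy j i with hji | rfl | hij
  · rw [update_of_ne (by omega)] at hj hj1
    exact hd j c hj hj1
  · rw [update_of_ne (by omega)] at hj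
    rw [update_self, Option.some_inj] at hj1
    obtain rfl := hl c hj
    cases c <;> simp at hj1
  · rcases (show j = i + 1 ∨ i + 1 < j by omega) with rfl | hij'
    · rw [update_self, Option.some_inj] at hj
      rw [update_of_ne (by omega)] at hj1
      obtain rfl := hr _ hj1
      cases c <;> simp at hj
    · rw [update_of_ne (by omega)] at hj hj1
      exact hd j c hj hj1

theorem exists_flip_of_forall_not_update (hd : IsCoherent d) {i : ℕ}
    (hi : ∀ b, ¬ IsCoherent (update d (i + 1) (some b))) :
    ∃ a, d i = some a ∧ d (i + 2) = some !a := by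
  have blocked (b : Bool) (hl : ∀ a, d i = some a → a = b)
      (hr : ∀ a, d (i + 2) = some a → a = b) : False :=
    hi b (hd.update_some hl hr)
  rcases hl : d i with _ | a
  · exact (blocked ((d (i + 2)).getD true) (by simp [hl]) fun a ha => by simp [ha]).elim
  · refine ⟨a, rfl, ?_⟩
    by_contra hne
    refine blocked a (by simp [hl]) fun c hc => ?_
    cases a <;> cases c <;> simp_all

theorem card_filter_eq_none_mod_two (hd : IsCoherent d) {m : ℕ} {b b' : Bool}
    (h0 : d 0 = some b) (hm : d m = some b')
    (hflip : ∀ i, i + 1 < m → d (i + 1) = none → ∃ a, d i = some a ∧ d (i + 2) = some !a) :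
    #{i ∈ range (m + 1) | d i = none} % 2 = (b != b').toNat := by
  induction m using Nat.strong_induction_on generalizing d b with
  | _ m ih =>
  rw [card_filter_range_succ', h0, if_neg (by simp)]
  rcases m with _ | m
  · simp_all
  rcases h1 : d 1 with _ | c
  · obtain ⟨k, rfl⟩ : ∃ k, m = k + 1 :=
      Nat.exists_eq_succ_of_ne_zero (by rintro rfl; simp_all)
    obtain ⟨a, ha, ha2⟩ := hflip 0 (by omega) h1
    obtain rfl : a = b := Option.some_inj.mp (ha.symm.trans h0)
    have := ih k (by omega) (d := fun i => d (i + 2)) (fun i a => hd (i + 2) a) ha2 hm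
      (fun i hi hn => hflip (i + 2) (by omega) hn)
    rw [card_filter_range_succ', h1, if_pos rfl]
    simp only [add_assoc, Nat.reduceAdd] at this ⊢
    cases a <;> cases b' <;> simp_all <;> omega
  · obtain rfl : b = c := hd.eq_of_succ h0 h1
    simpa using ih m (by omega) (d := fun i => d (i + 1)) (fun i a => hd (i + 1) a) h1 hm
      (fun i hi hn => hflip (i + 1) (by omega) hn)

end IsCoherent

namespace PathG

variable {N : ℕ}

theorem adj_iff {a b : Fin N} : (PathG N).Adj a b ↔ a.val + 1 = b.val ∨ b.val + 1 = a.val := by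
  rw [PathG, SimpleGraph.fromRel_adj, and_iff_right_iff_imp]
  rintro (h | h) rfl <;> omega

theorem adj_succ_iff {i : ℕ} (h : i + 2 < N) {w : Fin N} :
    (PathG N).Adj ⟨i + 1, by omega⟩ w ↔ w = ⟨i, by omega⟩ ∨ w = ⟨i + 2, h⟩ := by
  simp only [adj_iff, Fin.ext_iff]
  omega

theorem not_isLeaf_iff (hN : 2 ≤ N) {v : Fin N} :
    ¬ IsLeaf (PathG N) v ↔ 0 < v.val ∧ v.val + 1 < N := by
  constructor
  · intro hv
    by_contra! hend
    apply hv
    rcases Nat.eq_zero_or_pos v.val with h0 | h0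
    · refine ⟨⟨1, by omega⟩, ?_, fun w hw => ?_⟩ <;> simp only [adj_iff, Fin.ext_iff] at * <;>
        omega
    · have := hend h0
      refine ⟨⟨N - 2, by omega⟩, ?_, fun w hw => ?_⟩ <;> simp only [adj_iff, Fin.ext_iff] at * <;>
        omega
  · rintro ⟨h0, hN⟩ ⟨w, -, hw⟩
    have h1 := hw ⟨v.val - 1, by omega⟩ (adj_iff.mpr (by simp; omega))
    have h2 := hw ⟨v.val + 1, hN⟩ (adj_iff.mpr (by simp))
    exact absurd (congrArg Fin.val (h1.trans h2.symm)) (by simp)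

def arrow (i : ℕ) (b : Bool) (h : i + 1 < N) : Fin N × Fin N :=
  if b then (⟨i, by omega⟩, ⟨i + 1, h⟩) else (⟨i + 1, h⟩, ⟨i, by omega⟩)

theorem arrow_swap (i : ℕ) (b : Bool) (h : i + 1 < N) : (arrow i b h).swap = arrow i (!b) h := by
  cases b <;> rfl

theorem arrow_inj {i j : ℕ} {b c : Bool} {h : i + 1 < N} {h' : j + 1 < N} :
    arrow i b h = arrow j c h' ↔ i = j ∧ b = c := by
  cases b <;> cases c <;> simp [arrow, Fin.ext_iff] <;> omega

theorem adj_arrow (i : ℕ) (b : Bool) (h : i + 1 < N) :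
    (PathG N).Adj (arrow i b h).1 (arrow i b h).2 := by
  cases b <;> simp [arrow, adj_iff]

theorem exists_eq_arrow {p : Fin N × Fin N} (hp : (PathG N).Adj p.1 p.2) :
    ∃ i b h, p = arrow i b h := by
  obtain ⟨⟨a, ha⟩, ⟨c, hc⟩⟩ := p
  rcases adj_iff.mp hp with h | h <;> simp only at h
  · exact ⟨a, true, by omega, by simp [arrow, h]⟩
  · exact ⟨c, false, by omega, by simp [arrow, h]⟩

def dir (X : Finset (Fin N × Fin N)) (i : ℕ) : Option Bool :=
  if h : i + 1 < N then
    if arrow i true h ∈ X then some true else if arrow i false h ∈ X then some false else none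
  else none

variable {X : Finset (Fin N × Fin N)}

theorem dir_eq_some_iff (hX : ∀ p ∈ X, p.swap ∉ X) {i : ℕ} {b : Bool} :
    dir X i = some b ↔ ∃ h, arrow i b h ∈ X := by
  unfold dir
  split_ifs with h h1 h2 <;> cases b <;> simp_all
  exact hX _ _ h1

theorem dir_eq_none_iff {i : ℕ} : dir X i = none ↔ ∀ b h, arrow i b h ∉ X := by
  unfold dir
  split_ifs with h h1 h2 <;> simp_all [Bool.forall_bool]

theorem dir_empty : dir (∅ : Finset (Fin N × Fin N)) = fun _ => none := by
  funext i
  exact dir_eq_none_iff.mpr fun _ _ => Finset.notMem_empty _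

theorem dir_insert_arrow {i : ℕ} {b : Bool} {h : i + 1 < N} (hX : arrow i (!b) h ∉ X) :
    dir (insert (arrow i b h) X) = update (dir X) i (some b) := by
  funext j
  rcases eq_or_ne j i with rfl | hj
  · unfold dir
    cases b <;> simp_all [arrow_inj]
  · rw [update_of_ne hj]
    unfold dir
    simp [arrow_inj, hj]

theorem isSink_iff {i : ℕ} (h : i + 2 < N) :
    IsSink (PathG N) X ⟨i + 1, by omega⟩ ↔
      arrow i true (by omega) ∈ X ∧ arrow (i + 1) false h ∈ X := by
  simp only [IsSink, (PathG N).adj_comm _ ⟨i + 1, _⟩, adj_succ_iff h, forall_eq_or_imp,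
    forall_eq]
  rfl

theorem isSource_iff {i : ℕ} (h : i + 2 < N) :
    IsSource (PathG N) X ⟨i + 1, by omega⟩ ↔
      arrow i false (by omega) ∈ X ∧ arrow (i + 1) true h ∈ X := by
  simp only [IsSource, adj_succ_iff h, forall_eq_or_imp, forall_eq]
  rfl

theorem isState_iff (hN : 2 ≤ N) (hX : IsDecoration (PathG N) X) :
    IsState (PathG N) X ↔ IsCoherent (dir X) := by
  refine ⟨fun hs i b hi hi1 => ?_, fun hc => ⟨hX, fun v hv => ?_⟩⟩
  · obtain ⟨h1, hm1⟩ := (dir_eq_some_iff hX.2).mp hi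
    obtain ⟨h2, hm2⟩ := (dir_eq_some_iff hX.2).mp hi1
    have hint := hs.2 ⟨i + 1, h1⟩ ((not_isLeaf_iff hN).mpr ⟨by simp, by simp; omega⟩)
    cases b
    · exact hint.2 ((isSource_iff h2).mpr ⟨hm1, hm2⟩)
    · exact hint.1 ((isSink_iff h2).mpr ⟨hm1, hm2⟩)
  · obtain ⟨hv0, hvN⟩ := (not_isLeaf_iff hN).mp hv
    obtain ⟨_ | i, hi⟩ := v
    · simp at hv0
    rw [isSink_iff hvN, isSource_iff hvN]
    have hdir (j : ℕ) (b : Bool) {h : j + 1 < N} (hm : arrow j b h ∈ X) : dir X j = some b :=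
      (dir_eq_some_iff hX.2).mpr ⟨h, hm⟩
    exact ⟨fun ⟨h1, h2⟩ => hc i true (hdir _ _ h1) (hdir _ _ h2),
      fun ⟨h1, h2⟩ => hc i false (hdir _ _ h1) (hdir _ _ h2)⟩

theorem isDecoration_insert_arrow (hX : IsDecoration (PathG N) X) {i : ℕ} {b : Bool}
    {h : i + 1 < N} (hX' : arrow i (!b) h ∉ X) :
    IsDecoration (PathG N) (insert (arrow i b h) X) := by
  simp only [IsDecoration, mem_insert, forall_eq_or_imp, arrow_swap, not_or]
  refine ⟨⟨adj_arrow i b h, hX.1⟩, ⟨by simp [arrow_inj], hX'⟩,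
    fun p hp => ⟨fun he => hX' ?_, hX.2 p hp⟩⟩
  rwa [← arrow_swap, ← he, Prod.swap_swap]

theorem exists_dir_eq_update_of_follower {X' : Finset (Fin N × Fin N)}
    (hF : Follower (PathG N) X X') :
    ∃ i b, i + 1 < N ∧ dir X i = none ∧ dir X' = update (dir X) i (some b) := by
  obtain ⟨-, hX', p, hp, rfl⟩ := hF
  obtain ⟨i, b, h, rfl⟩ := exists_eq_arrow (hX'.1.1 p (mem_insert_self p X))
  have hswap : arrow i (!b) h ∉ X := fun hm =>
    hX'.1.2 _ (mem_insert_self _ _) (by rw [arrow_swap]; exact mem_insert_of_mem hm)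
  refine ⟨i, b, h, dir_eq_none_iff.mpr fun c _ => ?_, dir_insert_arrow hswap⟩
  cases b <;> cases c <;> assumption

theorem follower_insert_arrow (hX : IsState (PathG N) X) {i : ℕ} {b : Bool} {h : i + 1 < N}
    (hi : dir X i = none) (hc : IsCoherent (update (dir X) i (some b))) :
    Follower (PathG N) X (insert (arrow i b h) X) := by
  have hnot : arrow i (!b) h ∉ X := dir_eq_none_iff.mp hi _ _
  have hdec := isDecoration_insert_arrow hX.1 hnot
  refine ⟨hX, (isState_iff (by omega) hdec).mpr ?_, _, dir_eq_none_iff.mp hi _ _, rfl⟩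
  rwa [dir_insert_arrow hnot]

theorem exists_flip_of_forall_not_follower (hX : IsState (PathG N) X)
    (hno : ∀ X', ¬ Follower (PathG N) X X') {i : ℕ} (hi : i + 2 < N)
    (hnone : dir X (i + 1) = none) : ∃ a, dir X i = some a ∧ dir X (i + 2) = some !a :=
  ((isState_iff (by omega) hX.1).mp hX).exists_flip_of_forall_not_update fun _ hc =>
    hno _ (follower_insert_arrow (h := hi) hX hnone hc)

def numUnmarked (X : Finset (Fin N × Fin N)) : ℕ :=
  #{i ∈ range (N - 1) | dir X i = none}

theorem grundy_eq_of_ends_marked {m : ℕ} {X : Finset (Fin (m + 2) × Fin (m + 2))} {b b' : Bool}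
    (hX : IsState (PathG (m + 2)) X) (h0 : dir X 0 = some b) (hm : dir X m = some b') :
    grundy (PathG (m + 2)) X = (numUnmarked X + (b != b').toNat) % 2 := by
  induction hU : numUnmarked X using Nat.strong_induction_on generalizing X with
  | _ U ih =>
  have hb := Bool.toNat_le (b != b')
  have hfollow (X' : Finset (Fin (m + 2) × Fin (m + 2))) (hF : Follower (PathG (m + 2)) X X') :
      U ≠ 0 ∧ grundy (PathG (m + 2)) X' = (U - 1 + (b != b').toNat) % 2 := by
    obtain ⟨i, c, hi, hnone, hdir⟩ := exists_dir_eq_update_of_follower hF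
    have hi0 : 0 ≠ i := by rintro rfl; simp [h0] at hnone
    have him : m ≠ i := by rintro rfl; simp [hm] at hnone
    have hcount : numUnmarked X' + 1 = U := by
      rw [← hU, numUnmarked, numUnmarked, hdir]
      exact card_filter_update_some_add_one (by omega) hnone c
    refine ⟨by omega, ih _ (by omega) hF.2.1 ?_ ?_ (by omega)⟩
    · rwa [hdir, update_of_ne hi0]
    · rwa [hdir, update_of_ne him]
  rcases Nat.mod_two_eq_zero_or_one (U + (b != b').toNat) with hv | hv <;> rw [hv]
  · exact grundy_eq_zero_of_forall_follower fun X' hF => by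
      obtain ⟨hU0, hg⟩ := hfollow X' hF
      omega
  · obtain ⟨X', hF⟩ : ∃ X', Follower (PathG (m + 2)) X X' := by
      by_contra! hno
      have := ((isState_iff (by omega) hX.1).mp hX).card_filter_eq_none_mod_two h0 hm
        fun i hi => exists_flip_of_forall_not_follower hX hno (by omega)
      simp only [numUnmarked, Nat.reduceSubDiff] at hU
      omega
    refine grundy_eq_one_of_exists_follower ⟨X', hF, ?_⟩ fun X'' hF'' => ?_
    · have := hfollow X' hF
      omega
    · have := hfollow X'' hF''
      omega

theorem dir_singleton_arrow (i : ℕ) (b : Bool) (h : i + 1 < N) :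
    dir {arrow i b h} = update (fun _ => none) i (some b) := by
  rw [← insert_empty, dir_insert_arrow (notMem_empty _), dir_empty]

theorem isDecoration_singleton_arrow (i : ℕ) (b : Bool) (h : i + 1 < N) :
    IsDecoration (PathG N) {arrow i b h} := by
  rw [← insert_empty]
  exact isDecoration_insert_arrow ⟨by simp, by simp⟩ (notMem_empty _)

theorem grundy_two_end_arrows (n : ℕ) (b b' : Bool) (h : n = 0 → b = b') :
    grundy (PathG (n + 3)) {arrow 0 b (by omega), arrow (n + 1) b' (by omega)} =
      (n + (b != b').toNat) % 2 := by
  set Y : Finset (Fin (n + 3) × Fin (n + 3)) := {arrow (n + 1) b' (by omega)}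
  set X := insert (arrow 0 b (by omega)) Y
  have hnot : arrow 0 (!b) (by omega) ∉ Y := by simp [Y, arrow_inj]
  have hdir : dir X = update (update (fun _ => none) (n + 1) (some b')) 0 (some b) := by
    rw [dir_insert_arrow hnot, dir_singleton_arrow]
  have hcoh : IsCoherent (dir X) := by
    rw [hdir]
    intro i c h1 h2
    simp only [update_apply] at h1 h2
    split_ifs at h1 h2 <;> simp_all
  have hU : numUnmarked X = n := by
    have h1 := card_filter_update_some_add_one (k := n + 2)
      (d := update (fun _ => none) (n + 1) (some b')) (i := 0) (by omega) (by simp) b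
    have h2 := card_filter_update_some_add_one (k := n + 2) (d := fun _ => none) (i := n + 1)
      (by omega) rfl b'
    simp only [numUnmarked, hdir, Nat.reduceSubDiff]
    simp at h2
    omega
  have hX := (isState_iff (by omega)
    (isDecoration_insert_arrow (isDecoration_singleton_arrow _ _ _) hnot)).mpr hcoh
  rw [grundy_eq_of_ends_marked (m := n + 1) (b := b) (b' := b') hX (by rw [hdir]; simp)
    (by rw [hdir]; simp), hU]

end PathG

theorem Nat.add_one_mod_two_eq_xor_one (n : ℕ) : (n + 1) % 2 = n % 2 ^^^ 1 := by
  rcases Nat.mod_two_eq_zero_or_one n with h | h <;> simp [Nat.add_mod, h]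

/-- `g(F_n) = n̄` for `n ≥ 0`, and `g(C_n) = n̄ ⊕ 1` for `n ≥ 1`. -/
theorem grundy_flow_and_crash :
    (∀ n : ℕ, grundy (PathG (n + 3)) (flowState n) = n % 2) ∧
    (∀ n : ℕ, 1 ≤ n → grundy (PathG (n + 3)) (crashState n) = (n % 2) ^^^ 1) := by
  refine ⟨fun n => ?_, fun n hn => ?_⟩
  · exact (PathG.grundy_two_end_arrows n true true fun _ => rfl).trans (by simp)
  · rw [← Nat.add_one_mod_two_eq_xor_one]
    exact PathG.grundy_two_end_arrows n true false (by omega)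
end

section
/- g(T_n) = n for every integer n ≥ 0. -/
/-!
Encode a state of the path with vertices `0, …, n + 1` by its arrows `(q, d)`, one per marked
edge `{q, q + 1}`. Every state reachable from `T_n` contains the arrow `(n, true)` and splits at
its leftmost arrow, on edge `a`, into a twig with `a` free edges and the segment from edge `a` to
edge `n`. In that segment a free edge is unplayable only when it sits between two arrows of
opposite directions, so all plays of the segment have the same length parity `e`, which is read
off from `a`, the number of arrows and the direction of the arrow on edge `a`. Hence the value
is `a ^^^ e`: a move in the segment flips `e`, a move on an edge `q ≤ a - 2` reaches `q ^^^ e'`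
for either bit `e'`, and a move on edge `a - 1` must copy the direction at `a`. For `T_n`,
`a = n` and `e = 0`.
-/

section Grundy

variable {V : Type*} [Fintype V] [DecidableEq V] {G : SimpleGraph V}

theorem Follower.card_sub_lt {X X' : Finset (V × V)} (h : Follower G X X') :
    Fintype.card (V × V) - X'.card < Fintype.card (V × V) - X.card := by
  obtain ⟨-, -, p, hp, rfl⟩ := h
  have := Finset.card_le_univ (insert p X)
  rw [Finset.card_insert_of_notMem hp] at this ⊢
  omega

theorem Follower.induction {P : Finset (V × V) → Prop}
    (h : ∀ X, (∀ X', Follower G X X' → P X') → P X) (X : Finset (V × V)) : P X :=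
  (InvImage.wf (fun X : Finset (V × V) => Fintype.card (V × V) - X.card)
    wellFounded_lt).induction X fun X ih => h X fun X' hX' => ih X' hX'.card_sub_lt

theorem grundy_eq_of_forall {X : Finset (V × V)} {k : ℕ}
    (hne : ∀ X', Follower G X X' → grundy G X' ≠ k)
    (hlt : ∀ j < k, ∃ X', Follower G X X' ∧ grundy G X' = j) : grundy G X = k := by
  rw [grundy]
  refine le_antisymm (Nat.sInf_le hne) (le_csInf ⟨k, hne⟩ fun j hj => ?_)
  by_contra! hjk
  obtain ⟨X', hX', rfl⟩ := hlt j hjk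
  exact hj X' hX' rfl

end Grundy

theorem Nat.xor_eq_of_le_one (x : ℕ) {e : ℕ} (he : e ≤ 1) :
    x ^^^ e = 2 * (x / 2) + (x + e) % 2 := by
  have h := Nat.div_add_mod (x ^^^ e) 2
  have hdiv : (x ^^^ e) / 2 = x / 2 := by
    rw [Nat.xor_div_two]
    interval_cases e <;> simp
  rw [hdiv, Nat.xor_mod_two_eq] at h
  omega

section EdgeState

variable {E i q : ℕ} {d : Bool} {Y : Finset (ℕ × Bool)}

/-- `(q, d) ∈ Y` is an arrow on the edge `{q, q + 1}` of a path with `E` edges, pointing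
towards `q + 1` iff `d`. Two arrows on adjacent edges must agree, or their common vertex is a
sink or a source. -/
def IsEdgeState (E : ℕ) (Y : Finset (ℕ × Bool)) : Prop :=
  (∀ p ∈ Y, p.1 < E) ∧ (∀ q d d', (q, d) ∈ Y → (q, d') ∈ Y → d = d') ∧
    ∀ q d d', (q, d) ∈ Y → (q + 1, d') ∈ Y → d = d'

theorem IsEdgeState.mem_iff (hY : IsEdgeState E Y) (hq : (q, d) ∈ Y) {d' : Bool} :
    (q, d') ∈ Y ↔ d' = d :=
  ⟨fun h => hY.2.1 _ _ _ h hq, by rintro rfl; exact hq⟩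

theorem IsEdgeState.insert (hY : IsEdgeState E Y) (hq : q < E) (hfree : ∀ d', (q, d') ∉ Y)
    (hprev : ∀ q' d', q' + 1 = q → (q', d') ∈ Y → d' = d)
    (hnext : ∀ d', (q + 1, d') ∈ Y → d = d') : IsEdgeState E (insert (q, d) Y) := by
  obtain ⟨hlt, hdir, hadj⟩ := hY
  refine ⟨?_, ?_, ?_⟩
  · simp only [Finset.mem_insert, forall_eq_or_imp]
    exact ⟨hq, hlt⟩
  · simp only [Finset.mem_insert, Prod.mk.injEq]
    rintro q₁ d₁ d₂ (⟨rfl, rfl⟩ | h₁) (⟨h, rfl⟩ | h₂)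
    exacts [rfl, (hfree _ h₂).elim, (hfree _ (h ▸ h₁)).elim, hdir _ _ _ h₁ h₂]
  · simp only [Finset.mem_insert, Prod.mk.injEq]
    rintro q₁ d₁ d₂ (⟨rfl, rfl⟩ | h₁) (⟨h, rfl⟩ | h₂)
    exacts [absurd h (by omega), hnext _ h₂, hprev _ _ h h₁, hadj _ _ _ h₁ h₂]

theorem card_filter_le_eq_of_mem (hdir : ∀ q d d', (q, d) ∈ Y → (q, d') ∈ Y → d = d')
    (hi : (i, d) ∈ Y) :
    (Y.filter fun p => i ≤ p.1).card = (Y.filter fun p => i + 1 ≤ p.1).card + 1 := by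
  have : (Y.filter fun p => i ≤ p.1) = insert (i, d) (Y.filter fun p => i + 1 ≤ p.1) := by
    ext ⟨q, d'⟩
    simp only [Finset.mem_filter, Finset.mem_insert, Prod.mk.injEq]
    constructor
    · rintro ⟨hq, hiq⟩
      rcases hiq.eq_or_lt with rfl | hlt
      exacts [Or.inl ⟨rfl, hdir _ _ _ hq hi⟩, Or.inr ⟨hq, hlt⟩]
    · rintro (⟨rfl, rfl⟩ | ⟨hq, hlt⟩)
      exacts [⟨hi, le_rfl⟩, ⟨hq, by omega⟩]
  rw [this, Finset.card_insert_of_notMem (by simp)]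

theorem filter_le_eq_of_free (hfree : ∀ d, (i, d) ∉ Y) :
    (Y.filter fun p => i ≤ p.1) = Y.filter fun p => i + 1 ≤ p.1 := by
  refine Finset.filter_congr fun p hp => ⟨fun hip => ?_, fun h => by omega⟩
  rcases hip.eq_or_lt with rfl | hlt
  exacts [(hfree _ hp).elim, hlt]

/-- If no arrow can be added to the right of `i`, the free edges there are isolated between
arrows of opposite directions, so their number has the parity of the direction changes. -/
theorem parity_eq_zero_of_blocked {n : ℕ} (hY : IsEdgeState (n + 1) Y) (hn : (n, true) ∈ Y)
    (hblocked : ∀ q d, i < q → (∀ d', (q, d') ∉ Y) →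
      ¬ IsEdgeState (n + 1) (insert (q, d) Y))
    (hi : (i, d) ∈ Y) :
    (n + 1 - i + (Y.filter fun p => i ≤ p.1).card + if d then 0 else 1) % 2 = 0 := by
  induction h : n - i using Nat.strong_induction_on generalizing i d with
  | _ k ih =>
    have hin : i ≤ n := Nat.lt_succ_iff.1 (hY.1 _ hi)
    rw [card_filter_le_eq_of_mem hY.2.1 hi]
    rcases hin.eq_or_lt with rfl | hlt
    · have hempty : (Y.filter fun p => i + 1 ≤ p.1) = ∅ :=
        Finset.filter_false_of_mem fun p hp => by have := hY.1 p hp; omega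
      rw [hempty, hY.2.1 _ _ _ hi hn]
      simp
    by_cases hnext : ∃ d', (i + 1, d') ∈ Y
    · obtain ⟨d', hd'⟩ := hnext
      obtain rfl := hY.2.2 _ _ _ hi hd'
      have := ih (n - (i + 1)) (by omega) (fun q d hq => hblocked q d (by omega)) hd' rfl
      omega
    push Not at hnext
    have hturn : ∃ d', (i + 2, d') ∈ Y ∧ d ≠ d' := by
      by_contra! hsame
      refine hblocked (i + 1) d (by omega) hnext (hY.insert (by omega) hnext ?_ hsame)
      intro q' d' hq' hd'
      obtain rfl : q' = i := by omega
      exact hY.2.1 _ _ _ hd' hi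
    obtain ⟨d', hd', hdd'⟩ := hturn
    have := ih (n - (i + 2)) (by omega) (fun q d hq => hblocked q d (by omega)) hd' rfl
    rw [filter_le_eq_of_free hnext, show i + 1 + 1 = i + 2 from rfl]
    cases d <;> cases d' <;> first
      | exact absurd rfl hdd'
      | (simp only [Bool.false_eq_true, ↓reduceIte, add_zero] at this ⊢; omega)

end EdgeState

section Twig

variable {n a q : ℕ} {d : Bool} {Y : Finset (ℕ × Bool)}

def IsTwig (n a : ℕ) (Y : Finset (ℕ × Bool)) : Prop :=
  IsEdgeState (n + 1) Y ∧ (n, true) ∈ Y ∧ (∃ d, (a, d) ∈ Y) ∧ ∀ p ∈ Y, a ≤ p.1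

def twigParity (n a : ℕ) (Y : Finset (ℕ × Bool)) : ℕ :=
  (n + 1 - a + Y.card + if (a, false) ∈ Y then 1 else 0) % 2

def twigValue (n a : ℕ) (Y : Finset (ℕ × Bool)) : ℕ :=
  a ^^^ twigParity n a Y

theorem twigParity_le_one : twigParity n a Y ≤ 1 :=
  Nat.le_of_lt_succ (Nat.mod_lt _ two_pos)

theorem twigParity_insert_of_ne (hfree : ∀ d', (q, d') ∉ Y) (hqa : q ≠ a) :
    twigParity n a (insert (q, d) Y) = (twigParity n a Y + 1) % 2 := by
  have hmem : (a, false) ∈ insert (q, d) Y ↔ (a, false) ∈ Y := by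
    simp [Finset.mem_insert, Prod.mk.injEq, Ne.symm hqa]
  simp only [twigParity, Finset.card_insert_of_notMem (hfree d), hmem]
  omega

theorem twigParity_insert_self (hfree : ∀ d', (q, d') ∉ Y) :
    twigParity n q (insert (q, d) Y) = (n + 1 - q + Y.card + 1 + if d then 0 else 1) % 2 := by
  have hmem : (q, false) ∈ insert (q, d) Y ↔ d = false := by
    simp [Finset.mem_insert, Prod.mk.injEq, hfree false, eq_comm]
  cases d <;>
    simp only [twigParity, Finset.card_insert_of_notMem (hfree _), hmem, Bool.true_eq_false,
      Bool.false_eq_true, ↓reduceIte] <;> omega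

theorem IsTwig.le (h : IsTwig n a Y) : a ≤ n :=
  h.2.2.2 _ h.2.1

theorem IsTwig.insert_min (h : IsTwig n a Y) (hY : IsEdgeState (n + 1) (insert (q, d) Y)) :
    IsTwig n (min q a) (insert (q, d) Y) := by
  obtain ⟨-, hn, ⟨da, hda⟩, hmin⟩ := h
  refine ⟨hY, Finset.mem_insert_of_mem hn, ?_, ?_⟩
  · rcases min_choice q a with h | h <;> rw [h]
    exacts [⟨d, Finset.mem_insert_self _ _⟩, ⟨da, Finset.mem_insert_of_mem hda⟩]
  · simp only [Finset.mem_insert, forall_eq_or_imp]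
    exact ⟨min_le_left _ _, fun p hp => (min_le_right _ _).trans (hmin p hp)⟩

theorem IsTwig.isEdgeState_insert_of_add_two_le (h : IsTwig n a Y) (hq : q + 2 ≤ a)
    (d : Bool) : IsEdgeState (n + 1) (insert (q, d) Y) := by
  have hfar : ∀ q' d', (q', d') ∈ Y → q + 2 ≤ q' := fun q' d' hq' =>
    hq.trans (h.2.2.2 _ hq')
  refine h.1.insert (by have := h.le; omega) (fun d' hd' => ?_) (fun q' d' hq' hd' => ?_)
    (fun d' hd' => ?_) <;> have := hfar _ _ ‹_› <;> omega

theorem IsTwig.isEdgeState_insert_pred (h : IsTwig n a Y) (hda : (a, d) ∈ Y)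
    (hq : q + 1 = a) : IsEdgeState (n + 1) (insert (q, d) Y) := by
  have hge : ∀ q' d', (q', d') ∈ Y → a ≤ q' := fun q' d' hq' => h.2.2.2 _ hq'
  refine h.1.insert (by have := h.le; omega) (fun d' hd' => ?_) (fun q' d' hq' hd' => ?_)
    (fun d' hd' => h.1.2.1 _ _ _ hda (hq ▸ hd'))
  · have := hge _ _ hd'; omega
  · have := hge _ _ hd'; omega

theorem IsTwig.exists_insert_of_twigParity_eq_one (h : IsTwig n a Y)
    (he : twigParity n a Y = 1) :
    ∃ q d, a < q ∧ (∀ d', (q, d') ∉ Y) ∧ IsEdgeState (n + 1) (insert (q, d) Y) := by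
  by_contra! hblocked
  obtain ⟨hY, hn, ⟨da, hda⟩, hge⟩ := h
  have := parity_eq_zero_of_blocked hY hn hblocked hda
  rw [Finset.filter_true_of_mem hge] at this
  simp only [twigParity, hY.mem_iff hda] at he
  cases da <;> simp only [Bool.false_eq_true, ↓reduceIte] at he this <;> omega

theorem IsTwig.twigValue_insert_ne (h : IsTwig n a Y) (hfree : ∀ d', (q, d') ∉ Y)
    (hY : IsEdgeState (n + 1) (insert (q, d) Y)) :
    twigValue n (min q a) (insert (q, d) Y) ≠ twigValue n a Y := by
  obtain ⟨da, hda⟩ := h.2.2.1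
  have han := h.le
  have hqa : q ≠ a := by rintro rfl; exact hfree _ hda
  unfold twigValue
  rw [Nat.xor_eq_of_le_one _ twigParity_le_one, Nat.xor_eq_of_le_one _ twigParity_le_one]
  rcases hqa.lt_or_gt with hlt | hgt
  · rw [min_eq_left hlt.le, twigParity_insert_self hfree]
    rcases (show q + 1 ≤ a from hlt).eq_or_lt with hpred | hfar
    · obtain rfl : d = da := hY.2.2 _ _ _ (Finset.mem_insert_self _ _)
        (Finset.mem_insert_of_mem (hpred ▸ hda))
      unfold twigParity
      cases d <;> simp only [h.1.mem_iff hda, Bool.false_eq_true, ↓reduceIte] <;> omega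
    · unfold twigParity
      omega
  · rw [min_eq_right hgt.le, twigParity_insert_of_ne hfree hqa]
    have := twigParity_le_one (n := n) (a := a) (Y := Y)
    omega

theorem IsTwig.exists_twigValue_insert_of_add_two_le (h : IsTwig n a Y) (hq : q + 2 ≤ a)
    {t : ℕ} (ht : t ≤ 1) :
    ∃ d, (∀ d', (q, d') ∉ Y) ∧ IsEdgeState (n + 1) (insert (q, d) Y) ∧
      twigValue n (min q a) (insert (q, d) Y) = q ^^^ t := by
  have hfree : ∀ d', (q, d') ∉ Y := fun d' hd' => by have := h.2.2.2 _ hd'; omega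
  have hpar : ∃ d : Bool, (n + 1 - q + Y.card + 1 + if d then 0 else 1) % 2 = t := by
    rcases Nat.mod_two_eq_zero_or_one (n + 1 - q + Y.card + 1 + t) with he | he
    · exact ⟨true, by simp only [↓reduceIte]; omega⟩
    · exact ⟨false, by simp only [Bool.false_eq_true, ↓reduceIte]; omega⟩
  obtain ⟨d, hd⟩ := hpar
  refine ⟨d, hfree, h.isEdgeState_insert_of_add_two_le hq d, ?_⟩
  rw [twigValue, min_eq_left (by omega), twigParity_insert_self hfree, hd]

theorem IsTwig.exists_twigValue_insert_eq (h : IsTwig n a Y) {j : ℕ}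
    (hj : j < twigValue n a Y) :
    ∃ q d, (∀ d', (q, d') ∉ Y) ∧ IsEdgeState (n + 1) (insert (q, d) Y) ∧
      twigValue n (min q a) (insert (q, d) Y) = j := by
  have he := twigParity_le_one (n := n) (a := a) (Y := Y)
  rw [twigValue, Nat.xor_eq_of_le_one _ he] at hj
  obtain hfar | ⟨hpred, he0⟩ | ⟨hpred, he1, heven⟩ | ⟨rfl, he1⟩ :
      j + 2 ≤ a ∨ (j + 1 = a ∧ twigParity n a Y = 0) ∨
        (j + 1 = a ∧ twigParity n a Y = 1 ∧ a % 2 = 0) ∨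
        (j = a ∧ twigParity n a Y = 1) := by
    omega
  · obtain ⟨d, hd⟩ := h.exists_twigValue_insert_of_add_two_le hfar zero_le_one
    exact ⟨j, d, by simpa using hd⟩
  · obtain ⟨da, hda⟩ := h.2.2.1
    have hfree : ∀ d', (j, d') ∉ Y := fun d' hd' => by have := h.2.2.2 _ hd'; omega
    refine ⟨j, da, hfree, h.isEdgeState_insert_pred hda hpred, ?_⟩
    rw [twigValue, min_eq_left (by omega), twigParity_insert_self hfree]
    simp only [twigParity, h.1.mem_iff hda] at he0
    have han := h.le
    cases da <;> simp only [Bool.false_eq_true, ↓reduceIte, xor_left_eq_self_iff] at he0 ⊢ <;>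
      omega
  · obtain ⟨d, hd⟩ := h.exists_twigValue_insert_of_add_two_le (q := a - 2) (by omega) le_rfl
    refine ⟨a - 2, d, hd.1, hd.2.1, ?_⟩
    rw [hd.2.2, Nat.xor_eq_of_le_one _ le_rfl]
    omega
  · obtain ⟨q, d, hq, hfree, hY⟩ := h.exists_insert_of_twigParity_eq_one he1
    refine ⟨q, d, hfree, hY, ?_⟩
    rw [twigValue, min_eq_right hq.le, twigParity_insert_of_ne hfree hq.ne', he1]
    simp

theorem isTwig_singleton (n : ℕ) : IsTwig n n {(n, true)} := by
  refine ⟨⟨?_, ?_, ?_⟩, ?_, ⟨true, ?_⟩, ?_⟩ <;> simp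

end Twig

theorem PathG.adj_iff_s7 {m : ℕ} {u v : Fin m} :
    (PathG m).Adj u v ↔ u.val + 1 = v.val ∨ v.val + 1 = u.val := by
  rw [PathG, SimpleGraph.fromRel_adj]
  exact ⟨fun h => h.2, fun h => ⟨by rintro rfl; omega, h⟩⟩

theorem PathG.isLeaf_iff {n : ℕ} {v : Fin (n + 2)} :
    IsLeaf (PathG (n + 2)) v ↔ v.val = 0 ∨ v.val = n + 1 := by
  have hv := v.isLt
  constructor
  · rintro ⟨w, -, huniq⟩
    by_contra! hint
    have h₁ := huniq ⟨v.val - 1, by omega⟩ (PathG.adj_iff_s7.2 (Or.inr (by simp only; omega)))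
    have h₂ := huniq ⟨v.val + 1, by omega⟩ (PathG.adj_iff_s7.2 (by simp))
    have := Fin.mk.inj_iff.1 (h₁.trans h₂.symm)
    omega
  · rintro (h | h)
    · refine ⟨⟨1, by omega⟩, PathG.adj_iff_s7.2 (Or.inl (by simp [h])), fun w hw => ?_⟩
      replace hw := PathG.adj_iff_s7.1 hw
      exact Fin.ext (show w.val = 1 by omega)
    · refine ⟨⟨n, by omega⟩, PathG.adj_iff_s7.2 (Or.inr (by simp [h])), fun w hw => ?_⟩
      replace hw := PathG.adj_iff_s7.1 hw
      exact Fin.ext (show w.val = n by omega)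

section EdgeCodes

variable {n : ℕ} {X X' : Finset (Fin (n + 2) × Fin (n + 2))}

def edgeCode {m : ℕ} (p : Fin m × Fin m) : ℕ × Bool :=
  (min p.1.val p.2.val, decide (p.1.val < p.2.val))

def edgeCodes {m : ℕ} (X : Finset (Fin m × Fin m)) : Finset (ℕ × Bool) :=
  X.image edgeCode

theorem edgeCode_injOn {m : ℕ} :
    Set.InjOn edgeCode {p : Fin m × Fin m | (PathG m).Adj p.1 p.2} := by
  rintro ⟨u, v⟩ huv ⟨u', v'⟩ huv' h
  simp only [Set.mem_ofPred_eq, PathG.adj_iff_s7] at huv huv'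
  simp only [edgeCode, Prod.mk.injEq, decide_eq_decide] at h
  simp only [Prod.mk.injEq, Fin.ext_iff]
  omega

theorem edgeCode_of_succ_eq {m : ℕ} {u w : Fin m} (h : u.val + 1 = w.val) :
    edgeCode (u, w) = (u.val, true) := by
  dsimp only [edgeCode]
  rw [min_eq_left (by omega), decide_eq_true (by omega)]

theorem edgeCode_of_eq_succ {m : ℕ} {u w : Fin m} (h : u.val + 1 = w.val) :
    edgeCode (w, u) = (u.val, false) := by
  dsimp only [edgeCode]
  rw [min_eq_right (by omega), decide_eq_false (by omega)]

theorem edgeCode_swap {m : ℕ} {p : Fin m × Fin m} (hp : (PathG m).Adj p.1 p.2) :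
    edgeCode p.swap = ((edgeCode p).1, !(edgeCode p).2) := by
  rw [PathG.adj_iff_s7] at hp
  simp only [edgeCode, Prod.fst_swap, Prod.snd_swap, Prod.mk.injEq]
  constructor
  · exact min_comm _ _
  · rcases hp with hp | hp <;> simp only [← hp] <;> simp

theorem mem_edgeCodes_iff {m : ℕ} {X : Finset (Fin m × Fin m)}
    (hX : ∀ p ∈ X, (PathG m).Adj p.1 p.2) {p : Fin m × Fin m} (hp : (PathG m).Adj p.1 p.2) :
    edgeCode p ∈ edgeCodes X ↔ p ∈ X := by
  refine ⟨fun h => ?_, Finset.mem_image_of_mem _⟩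
  obtain ⟨p', hp', he⟩ := Finset.mem_image.1 h
  rwa [← edgeCode_injOn (hX p' hp') hp he]

theorem exists_edgeCode_eq {q : ℕ} (hq : q < n + 1) (d : Bool) :
    ∃ p : Fin (n + 2) × Fin (n + 2), (PathG (n + 2)).Adj p.1 p.2 ∧ edgeCode p = (q, d) := by
  cases d
  · exact ⟨(⟨q + 1, by omega⟩, ⟨q, by omega⟩), PathG.adj_iff_s7.2 (Or.inr rfl),
      edgeCode_of_eq_succ rfl⟩
  · exact ⟨(⟨q, by omega⟩, ⟨q + 1, by omega⟩), PathG.adj_iff_s7.2 (Or.inl rfl),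
      edgeCode_of_succ_eq rfl⟩

theorem PathG.isSink_iff_s7 (hX : ∀ p ∈ X, (PathG (n + 2)).Adj p.1 p.2) {u w v : Fin (n + 2)}
    (hu : u.val + 1 = w.val) (hv : w.val + 1 = v.val) :
    IsSink (PathG (n + 2)) X w ↔
      (u.val, true) ∈ edgeCodes X ∧ (w.val, false) ∈ edgeCodes X := by
  have huw : (PathG (n + 2)).Adj u w := PathG.adj_iff_s7.2 (Or.inl hu)
  have hvw : (PathG (n + 2)).Adj v w := PathG.adj_iff_s7.2 (Or.inr hv)
  rw [← edgeCode_of_succ_eq hu, ← edgeCode_of_eq_succ hv, mem_edgeCodes_iff hX huw,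
    mem_edgeCodes_iff hX hvw]
  refine ⟨fun h => ⟨h u huw, h v hvw⟩, fun ⟨hu', hv'⟩ x hx => ?_⟩
  rcases PathG.adj_iff_s7.1 hx with hx | hx
  · rwa [show x = u by ext; omega]
  · rwa [show x = v by ext; omega]

theorem PathG.isSource_iff_s7 (hX : ∀ p ∈ X, (PathG (n + 2)).Adj p.1 p.2) {u w v : Fin (n + 2)}
    (hu : u.val + 1 = w.val) (hv : w.val + 1 = v.val) :
    IsSource (PathG (n + 2)) X w ↔
      (u.val, false) ∈ edgeCodes X ∧ (w.val, true) ∈ edgeCodes X := by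
  have hwu : (PathG (n + 2)).Adj w u := PathG.adj_iff_s7.2 (Or.inr hu)
  have hwv : (PathG (n + 2)).Adj w v := PathG.adj_iff_s7.2 (Or.inl hv)
  rw [← edgeCode_of_eq_succ hu, ← edgeCode_of_succ_eq hv, mem_edgeCodes_iff hX hwu,
    mem_edgeCodes_iff hX hwv]
  refine ⟨fun h => ⟨h u hwu, h v hwv⟩, fun ⟨hu', hv'⟩ x hx => ?_⟩
  rcases PathG.adj_iff_s7.1 hx with hx | hx
  · rwa [show x = v by ext; omega]
  · rwa [show x = u by ext; omega]

theorem edgeCode_fst_lt {p : Fin (n + 2) × Fin (n + 2)} (hp : (PathG (n + 2)).Adj p.1 p.2) :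
    (edgeCode p).1 < n + 1 := by
  have := PathG.adj_iff_s7.1 hp
  have := p.1.isLt
  have := p.2.isLt
  simp only [edgeCode]
  omega

theorem PathG.isState_iff_s7 (hX : ∀ p ∈ X, (PathG (n + 2)).Adj p.1 p.2) :
    IsState (PathG (n + 2)) X ↔ IsEdgeState (n + 1) (edgeCodes X) := by
  have hlt : ∀ c ∈ edgeCodes X, c.1 < n + 1 := by
    intro c hc
    obtain ⟨p, hp, rfl⟩ := Finset.mem_image.1 hc
    exact edgeCode_fst_lt (hX p hp)
  constructor
  · rintro ⟨⟨-, hswap⟩, hint⟩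
    refine ⟨hlt, fun q d d' hd hd' => ?_, fun q d d' hd hd' => ?_⟩ <;> by_contra hne
    · obtain ⟨p, hp, hpq⟩ := Finset.mem_image.1 hd
      have : edgeCode p.swap ∈ edgeCodes X := by
        rw [edgeCode_swap (hX p hp), hpq]
        cases d <;> cases d' <;> simp_all
      exact hswap p hp ((mem_edgeCodes_iff hX (hX p hp).symm).1 this)
    · have := hlt _ hd'
      have hw : ¬ IsLeaf (PathG (n + 2)) ⟨q + 1, by omega⟩ := by
        rw [PathG.isLeaf_iff]
        simp only
        omega
      obtain ⟨hsink, hsource⟩ := hint _ hw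
      have hu : (⟨q, by omega⟩ : Fin (n + 2)).val + 1 = q + 1 := rfl
      have hv : q + 1 + 1 = (⟨q + 2, by omega⟩ : Fin (n + 2)).val := rfl
      cases d <;> cases d'
      · exact hne rfl
      · exact hsource ((PathG.isSource_iff_s7 hX hu hv).2 ⟨hd, hd'⟩)
      · exact hsink ((PathG.isSink_iff_s7 hX hu hv).2 ⟨hd, hd'⟩)
      · exact hne rfl
  · rintro ⟨-, hdir, hadj⟩
    refine ⟨⟨hX, fun p hp hswap => ?_⟩, fun w hw => ?_⟩
    · have h₁ := Finset.mem_image_of_mem edgeCode hp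
      have h₂ := Finset.mem_image_of_mem edgeCode hswap
      rw [edgeCode_swap (hX p hp)] at h₂
      generalize edgeCode p = c at h₁ h₂
      exact absurd (hdir c.1 c.2 (!c.2) h₁ h₂) (by cases c.2 <;> simp)
    · rw [PathG.isLeaf_iff] at hw
      have hw' : w.val - 1 + 1 = w.val := by omega
      have hu : (⟨w.val - 1, by omega⟩ : Fin (n + 2)).val + 1 = w.val := hw'
      have hv : w.val + 1 = (⟨w.val + 1, by omega⟩ : Fin (n + 2)).val := rfl
      refine ⟨fun hsink => ?_, fun hsource => ?_⟩
      · obtain ⟨h₁, h₂⟩ := (PathG.isSink_iff_s7 hX hu hv).1 hsink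
        rw [← hw'] at h₂
        exact absurd (hadj _ _ _ h₁ h₂) (by simp)
      · obtain ⟨h₁, h₂⟩ := (PathG.isSource_iff_s7 hX hu hv).1 hsource
        rw [← hw'] at h₂
        exact absurd (hadj _ _ _ h₁ h₂) (by simp)

theorem Follower.exists_edgeCodes_eq_insert (h : Follower (PathG (n + 2)) X X') :
    ∃ q d, (∀ d', (q, d') ∉ edgeCodes X) ∧
      IsEdgeState (n + 1) (insert (q, d) (edgeCodes X)) ∧
      edgeCodes X' = insert (q, d) (edgeCodes X) := by
  obtain ⟨-, hX', p, hp, rfl⟩ := h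
  have hcodes : edgeCodes (insert p X) = insert (edgeCode p) (edgeCodes X) :=
    Finset.image_insert _ _ _
  have hadj := hX'.1.1
  have hXadj : ∀ x ∈ X, (PathG (n + 2)).Adj x.1 x.2 := fun x hx =>
    hadj x (Finset.mem_insert_of_mem hx)
  have hpadj := hadj p (Finset.mem_insert_self _ _)
  refine ⟨(edgeCode p).1, (edgeCode p).2, fun d' hd' => ?_,
    hcodes ▸ (PathG.isState_iff_s7 hadj).1 hX', hcodes⟩
  cases Bool.eq_or_eq_not d' (edgeCode p).2 with
  | inl h => exact hp ((mem_edgeCodes_iff hXadj hpadj).1 (by rwa [h] at hd'))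
  | inr h =>
    rw [h, ← edgeCode_swap hpadj, mem_edgeCodes_iff hXadj hpadj.symm] at hd'
    exact hX'.1.2 p (Finset.mem_insert_self _ _) (Finset.mem_insert_of_mem hd')

theorem exists_follower_edgeCodes_eq_insert {q : ℕ} {d : Bool}
    (hX : IsState (PathG (n + 2)) X) (hfree : ∀ d', (q, d') ∉ edgeCodes X)
    (hY : IsEdgeState (n + 1) (insert (q, d) (edgeCodes X))) :
    ∃ X', Follower (PathG (n + 2)) X X' ∧ edgeCodes X' = insert (q, d) (edgeCodes X) := by
  obtain ⟨p, hpadj, hpq⟩ := exists_edgeCode_eq (hY.1 _ (Finset.mem_insert_self _ _)) d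
  have hcodes : edgeCodes (insert p X) = insert (q, d) (edgeCodes X) := by
    rw [edgeCodes, Finset.image_insert, hpq]
    rfl
  have hp : p ∉ X := fun hp => hfree d (hpq ▸ Finset.mem_image_of_mem _ hp)
  have hadj : ∀ x ∈ insert p X, (PathG (n + 2)).Adj x.1 x.2 := by
    simpa only [Finset.mem_insert, forall_eq_or_imp] using ⟨hpadj, hX.1.1⟩
  exact ⟨insert p X, ⟨hX, (PathG.isState_iff_s7 hadj).2 (hcodes ▸ hY), p, hp, rfl⟩, hcodes⟩

end EdgeCodes

theorem grundy_eq_twigValue {n : ℕ} (X : Finset (Fin (n + 2) × Fin (n + 2))) :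
    IsState (PathG (n + 2)) X → ∀ a, IsTwig n a (edgeCodes X) →
      grundy (PathG (n + 2)) X = twigValue n a (edgeCodes X) := by
  induction X using Follower.induction with | h X ih => ?_
  intro hX a ha
  refine grundy_eq_of_forall (fun X' hX' => ?_) ?_
  · obtain ⟨q, d, hfree, hY, hcodes⟩ := hX'.exists_edgeCodes_eq_insert
    rw [ih X' hX' hX'.2.1 _ (hcodes ▸ ha.insert_min hY), hcodes]
    exact ha.twigValue_insert_ne hfree hY
  · intro j hj
    obtain ⟨q, d, hfree, hY, hval⟩ := ha.exists_twigValue_insert_eq hj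
    obtain ⟨X', hX', hcodes⟩ := exists_follower_edgeCodes_eq_insert hX hfree hY
    exact ⟨X', hX', by rw [ih X' hX' hX'.2.1 _ (hcodes ▸ ha.insert_min hY), hcodes, hval]⟩

/-- `g(T_n) = n` for every `n ≥ 0`. -/
theorem grundy_twig (n : ℕ) : grundy (PathG (n + 2)) (twigState n) = n := by
  have hcodes : edgeCodes (twigState n) = {(n, true)} := by
    simp [edgeCodes, twigState, edgeCode]
  have hstate : IsState (PathG (n + 2)) (twigState n) :=
    (PathG.isState_iff_s7 (by simp [twigState, PathG.adj_iff_s7])).2 (hcodes ▸ (isTwig_singleton n).1)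
  rw [grundy_eq_twigValue _ hstate n (hcodes ▸ isTwig_singleton n), hcodes]
  simp [twigValue, twigParity]
end

section
/- g(R_n) = n̄ for every integer n ≥ 1. -/
theorem grundy_eq_of_followers {V : Type*} [Fintype V] [DecidableEq V] (G : SimpleGraph V)
    (φ : Finset (V × V) → ℕ) (hne : ∀ X X', Follower G X X' → φ X' ≠ φ X)
    (hlt : ∀ X, IsState G X → ∀ v < φ X, ∃ X', Follower G X X' ∧ φ X' = v)
    {X : Finset (V × V)} (hX : IsState G X) : grundy G X = φ X := by
  induction hm : Fintype.card (V × V) - X.card using Nat.strong_induction_on generalizing X with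
  | _ m ih =>
  have hfol : ∀ X', Follower G X X' → grundy G X' = φ X' := by
    intro X' hF
    obtain ⟨-, hX', p, hp, rfl⟩ := hF
    have hcard := Finset.card_le_univ (insert p X)
    rw [Finset.card_insert_of_notMem hp] at hcard
    exact ih _ (by rw [Finset.card_insert_of_notMem hp]; omega) hX' rfl
  have hmem : φ X ∈ {m | ∀ X', Follower G X X' → grundy G X' ≠ m} := fun X' hF =>
    hfol X' hF ▸ hne X X' hF
  rw [grundy]
  refine le_antisymm (Nat.sInf_le hmem) (not_lt.1 fun hlt' => ?_)
  obtain ⟨X', hF, hv⟩ := hlt X hX _ hlt'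
  exact Nat.sInf_mem ⟨_, hmem⟩ X' hF (by rw [hfol X' hF, hv])

namespace PathGame

open List

/-- The label of the edge `{i, i + 1}` of a path: `some true` for the arrow `(i, i + 1)`,
`some false` for `(i + 1, i)`, `none` if the edge is unmarked. -/
abbrev Label := Option Bool

/-- Two consecutive edges agree unless their arrows make the common vertex a sink or a source. -/
def Agree : Label → Label → Prop
  | some a, some b => a = b
  | _, _ => True

@[simp] lemma agree_none_left (y : Label) : Agree none y := trivial

@[simp] lemma agree_none_right (x : Label) : Agree x none := by
  cases x <;> trivial

@[simp] lemma agree_some_some {a b : Bool} : Agree (some a) (some b) ↔ a = b := Iff.rfl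

lemma agree_iff {x y : Label} :
    Agree x y ↔
      ¬(x = some true ∧ y = some false) ∧ ¬(x = some false ∧ y = some true) := by
  rcases x with _ | _ | _ <;> rcases y with _ | _ | _ <;> simp

lemma isChain_replicate_none_append (k : ℕ) (l : List Label) :
    (replicate k none ++ l).IsChain Agree ↔ l.IsChain Agree := by
  induction k with
  | zero => rfl
  | succ k ih => simp [replicate_succ, isChain_cons, ih]

lemma isChain_cons_replicate_none_append (x : Label) (k : ℕ) (l : List Label) :
    (x :: (replicate k none ++ l)).IsChain Agree ↔
      (k = 0 → ∀ y ∈ l.head?, Agree x y) ∧ l.IsChain Agree := by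
  cases k with
  | zero => simp [isChain_cons]
  | succ k =>
    simp only [Nat.add_one_ne_zero, false_imp_iff, true_and]
    exact (isChain_cons_cons.trans (and_iff_right (agree_none_right x))).trans
      (isChain_replicate_none_append (k + 1) l)

/-- The Grundy value of a run of `k` unmarked edges bounded by the arrows `x` and `y` (`none` for
an end of the path): `k mod 2` for a rod, `k` for a twig, `k mod 2` for a flow and `(k + 1) mod 2`
for a crash. -/
def runValue : Label → Label → ℕ → ℕ
  | none, none, k => k % 2
  | some d, some e, k => (k + if d = e then 0 else 1) % 2
  | _, _, k => k

/-- `value x k l` is the XOR of the `runValue`s of the maximal runs of the labelling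
`x, none ^ k, l`; `x` is the last arrow before `l` (`none` if there is none) and `k` the number of
unmarked edges since. -/
def value : Label → ℕ → List Label → ℕ
  | x, k, [] => runValue x none k
  | x, k, none :: l => value x (k + 1) l
  | x, k, some e :: l => runValue x (some e) k ^^^ value (some e) 0 l

lemma value_replicate_append (x : Label) (k j : ℕ) (l : List Label) :
    value x k (replicate j none ++ l) = value x (k + j) l := by
  induction j generalizing k with
  | zero => rfl
  | succ j ih => rw [replicate_succ, cons_append, value, ih, Nat.add_right_comm, Nat.add_assoc]

lemma xor_le_add_one {a b : ℕ} (hb : b ≤ 1) : a ^^^ b ≤ a + 1 := by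
  interval_cases b
  · simp
  · rcases Nat.even_or_odd a with h | h
    · rw [Nat.xor_one_of_even h]
    · rw [Nat.xor_one_of_odd h]; omega

lemma exists_runValue_eq_zero (d : Bool) (c : ℕ) :
    ∃ e, runValue (some d) (some e) c = 0 ∧ runValue (some e) (some d) c = 0 ∧
      (c = 0 → d = e) := by
  rcases Nat.mod_two_eq_zero_or_one c with h | h
  · exact ⟨d, by simp [runValue, h]⟩
  · refine ⟨!d, ?_, ?_, by omega⟩ <;> cases d <;> simp [runValue] <;> omega

theorem runValue_split_ne {x y : Label} {a c : ℕ} {e : Bool}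
    (hx : a = 0 → Agree x (some e)) (hy : c = 0 → Agree (some e) y) :
    runValue x (some e) a ^^^ runValue (some e) y c ≠ runValue x y (a + 1 + c) := by
  intro h
  have hpar := congrArg (· % 2) h
  simp only [Nat.xor_mod_two_eq] at hpar
  rcases x with _ | d <;> rcases y with _ | f <;> simp only [runValue] at h hpar
  · omega
  · rcases Nat.eq_zero_or_pos c with rfl | hc
    · simp_all
    · have := xor_le_add_one (a := a) (b := (c + if e = f then 0 else 1) % 2) (by omega)
      omega
  · rcases Nat.eq_zero_or_pos a with rfl | ha
    · simp_all
    · have := xor_le_add_one (a := c) (b := (a + if d = e then 0 else 1) % 2) (by omega)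
      rw [Nat.xor_comm] at h
      omega
  · cases d <;> cases e <;> cases f <;> simp at hpar <;> omega

theorem exists_runValue_split {x y : Label} {k v : ℕ} (hk : k = 0 → Agree x y)
    (hv : v < runValue x y k) :
    ∃ a c e, a + 1 + c = k ∧ (a = 0 → Agree x (some e)) ∧ (c = 0 → Agree (some e) y) ∧
      runValue x (some e) a ^^^ runValue (some e) y c = v := by
  rcases x with _ | d <;> rcases y with _ | f <;> simp only [runValue] at hv ⊢
  · exact ⟨k / 2, k / 2, true, by omega, by simp, by simp, by simp; omega⟩
  · obtain ⟨e, -, he, hfe⟩ := exists_runValue_eq_zero f (k - 1 - v)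
    exact ⟨v, k - 1 - v, e, by omega, by simp, fun h => by simp [hfe h],
      by simpa [runValue] using he⟩
  · obtain ⟨e, he, -, hde⟩ := exists_runValue_eq_zero d (k - 1 - v)
    exact ⟨k - 1 - v, v, e, by omega, fun h => by simp [hde h], by simp,
      by simpa [runValue] using he⟩
  · have hk0 : k ≠ 0 := fun h0 => by
      obtain rfl : d = f := hk h0
      simp [h0] at hv
    have hv0 : v = 0 := by omega
    refine ⟨0, k - 1, d, by omega, fun _ => rfl, fun h => ?_, ?_⟩
    · simp only [agree_some_some]
      split_ifs at hv with hdf <;> omega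
    · rw [if_pos rfl, Nat.zero_mod, Nat.zero_xor]
      split_ifs at hv ⊢ <;> omega

inductive Move : List Label → List Label → Prop
  | head (e : Bool) (l : List Label) : Move (none :: l) (some e :: l)
  | cons (x : Label) {l l' : List Label} : Move l l' → Move (x :: l) (x :: l')

lemma Move.append_left (A : List Label) {l l' : List Label} (h : Move l l') :
    Move (A ++ l) (A ++ l') := by
  induction A with
  | nil => exact h
  | cons x A ih => exact ih.cons x

lemma Move.replicate_append (a c : ℕ) (e : Bool) (T : List Label) :
    Move (replicate (a + 1 + c) none ++ T)
      (replicate a none ++ some e :: (replicate c none ++ T)) := by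
  rw [Nat.add_assoc, Nat.add_comm 1, replicate_add, append_assoc, replicate_succ, cons_append]
  exact (Move.head e _).append_left _

lemma Move.set_some {l : List Label} {i : ℕ} (h : l[i]? = some none) (e : Bool) :
    Move l (l.set i (some e)) := by
  induction l generalizing i with
  | nil => simp at h
  | cons x l ih =>
    cases i with
    | zero =>
      obtain rfl : x = none := by simpa using h
      exact Move.head e l
    | succ i => exact (ih (by simpa using h)).cons x

lemma Move.exists_eq_set {l l' : List Label} (h : Move l l') :
    ∃ i e, l[i]? = some none ∧ l' = l.set i (some e) := by
  induction h with
  | head e l => exact ⟨0, e, rfl, rfl⟩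
  | cons x _ ih =>
    obtain ⟨i, e, hi, rfl⟩ := ih
    exact ⟨i + 1, e, by simpa using hi, rfl⟩

lemma value_replicate_some_replicate (x : Label) (a c : ℕ) (e : Bool) (T : List Label) :
    value x 0 (replicate a none ++ some e :: (replicate c none ++ T)) =
      runValue x (some e) a ^^^ value (some e) c T := by
  rw [value_replicate_append, value, value_replicate_append, Nat.zero_add, Nat.zero_add]

lemma isChain_replicate_some_replicate {x : Label} {a c : ℕ} {e : Bool} {T : List Label}
    (hx : a = 0 → Agree x (some e)) (hy : c = 0 → ∀ y ∈ T.head?, Agree (some e) y)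
    (hT : T.IsChain Agree) :
    (x :: (replicate a none ++ some e :: (replicate c none ++ T))).IsChain Agree := by
  rw [isChain_cons_replicate_none_append, isChain_cons_replicate_none_append]
  exact ⟨fun ha y hy => by cases hy; exact hx ha, hy, hT⟩

lemma runValue_xor_value_ne {x : Label} {e : Bool} {k : ℕ} (hx : k = 0 → Agree x (some e)) :
    ∀ (m : List Label) (j : ℕ), (some e :: (replicate j none ++ m)).IsChain Agree →
      runValue x (some e) k ^^^ value (some e) j m ≠ value x (k + 1 + j) m
  | [], _, _ => runValue_split_ne hx (fun _ => agree_none_right _)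
  | none :: m, j, h => by
    simpa [value, Nat.add_assoc] using
      runValue_xor_value_ne hx m (j + 1) (by simpa [replicate_succ'] using h)
  | some f :: m, j, h => by
    rw [isChain_cons_replicate_none_append] at h
    simp only [value, ← Nat.xor_assoc, ne_eq, Nat.xor_left_inj]
    exact runValue_split_ne hx fun hj => h.1 hj _ rfl

theorem value_ne_of_move {l l' : List Label} (h : Move l l') :
    ∀ (x : Label) (k : ℕ), (x :: (replicate k none ++ l')).IsChain Agree →
      value x k l' ≠ value x k l := by
  induction h with
  | head e m =>
    intro x k hc
    rw [isChain_cons_replicate_none_append] at hc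
    simpa [value] using
      runValue_xor_value_ne (fun hk => hc.1 hk _ rfl) m 0 (by simpa using hc.2)
  | cons y h ih =>
    intro x k hc
    cases y with
    | none => exact ih x (k + 1) (by simpa [replicate_succ'] using hc)
    | some f =>
      rw [isChain_cons_replicate_none_append] at hc
      simp only [value, ne_eq, Nat.xor_right_inj]
      exact ih (some f) 0 hc.2

theorem exists_move_value_eq (l : List Label) :
    ∀ (x : Label) (k v : ℕ), (x :: (replicate k none ++ l)).IsChain Agree →
      v < value x k l →
      ∃ l', Move (replicate k none ++ l) l' ∧ (x :: l').IsChain Agree ∧ value x 0 l' = v := by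
  induction l with
  | nil =>
    intro x k v _ hv
    obtain ⟨a, c, e, rfl, hx, -, hval⟩ := exists_runValue_split (fun _ => agree_none_right x) hv
    refine ⟨_, Move.replicate_append a c e [], isChain_replicate_some_replicate hx (by simp)
      isChain_nil, ?_⟩
    rwa [value_replicate_some_replicate, value]
  | cons y l ih =>
    intro x k v hc hv
    cases y with
    | none =>
      simpa [replicate_succ'] using ih x (k + 1) v (by simpa [replicate_succ'] using hc) hv
    | some f =>
      rw [isChain_cons_replicate_none_append] at hc
      -- `v < r ^^^ R` forces `v ^^^ R < r` (move in the first run) or `v ^^^ r < R` (move later).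
      rcases Nat.lt_xor_cases hv with hrun | hrest
      · obtain ⟨a, c, e, rfl, hx, hy, hval⟩ :=
          exists_runValue_split (fun hk => hc.1 hk _ rfl) hrun
        refine ⟨_, Move.replicate_append a c e _,
          isChain_replicate_some_replicate hx (fun hc0 y hy' => ?_) hc.2, ?_⟩
        · cases hy'; exact hy hc0
        · rw [value_replicate_some_replicate, value, ← Nat.xor_assoc, hval,
            Nat.xor_xor_cancel_right]
      · obtain ⟨l', hmove, hchain, hval⟩ :=
          ih (some f) 0 _ (by simpa using hc.2) hrest
        refine ⟨replicate k none ++ some f :: l', (hmove.cons _).append_left _,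
          (isChain_cons_replicate_none_append _ _ _).2 ⟨fun hk y hy => ?_, hchain⟩, ?_⟩
        · cases hy; exact hc.1 hk _ rfl
        · rw [value_replicate_append, Nat.zero_add, value, hval, Nat.xor_comm,
            Nat.xor_xor_cancel_right]

section Path

variable {n : ℕ} {X : Finset (Fin (n + 1) × Fin (n + 1))}

lemma pathG_adj {m : ℕ} {u v : Fin m} :
    (PathG m).Adj u v ↔ u.val + 1 = v.val ∨ v.val + 1 = u.val := by
  simp only [PathG, SimpleGraph.fromRel_adj, ne_eq, and_iff_right_iff_imp]
  rintro h rfl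
  omega

def arrow (i : Fin n) : Bool → Fin (n + 1) × Fin (n + 1)
  | true => (i.castSucc, i.succ)
  | false => (i.succ, i.castSucc)

lemma swap_arrow (i : Fin n) (e : Bool) : (arrow i e).swap = arrow i !e := by
  cases e <;> rfl

lemma arrow_inj {i j : Fin n} {e e' : Bool} : arrow i e = arrow j e' ↔ i = j ∧ e = e' := by
  cases e <;> cases e' <;> simp [arrow, Fin.ext_iff] <;> omega

lemma pathG_adj_iff_exists_arrow {p : Fin (n + 1) × Fin (n + 1)} :
    (PathG (n + 1)).Adj p.1 p.2 ↔ ∃ i e, arrow i e = p := by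
  constructor
  · rw [pathG_adj]
    rintro (h | h)
    · exact ⟨⟨p.1, by omega⟩, true, Prod.ext (Fin.ext rfl) (Fin.ext h)⟩
    · exact ⟨⟨p.2, by omega⟩, false, Prod.ext (Fin.ext h) (Fin.ext rfl)⟩
  · rintro ⟨i, e, rfl⟩
    cases e <;> simp [arrow, pathG_adj]

def label (X : Finset (Fin (n + 1) × Fin (n + 1))) (i : Fin n) : Label :=
  if arrow i true ∈ X then some true else if arrow i false ∈ X then some false else none

def encode (X : Finset (Fin (n + 1) × Fin (n + 1))) : List Label :=
  List.ofFn (label X)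

lemma getElem?_encode (X : Finset (Fin (n + 1) × Fin (n + 1))) (i : Fin n) :
    (encode X)[i.val]? = some (label X i) := by
  simp [encode]

lemma label_eq_none_iff {i : Fin n} : label X i = none ↔ ∀ e, arrow i e ∉ X := by
  unfold label
  split_ifs <;> simp_all [Bool.forall_bool]

lemma label_eq_some_iff (hX : IsDecoration (PathG (n + 1)) X) {i : Fin n} {e : Bool} :
    label X i = some e ↔ arrow i e ∈ X := by
  have := hX.2 (arrow i true)
  unfold label
  cases e <;> split_ifs <;> simp_all [swap_arrow]

lemma label_insert {i : Fin n} (h : label X i = none) (e : Bool) (j : Fin n) :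
    label (insert (arrow i e) X) j = if j = i then some e else label X j := by
  rw [label_eq_none_iff] at h
  unfold label
  by_cases hj : j = i
  · subst hj
    cases e <;> simp [h, arrow_inj]
  · simp [arrow_inj, hj]

lemma encode_insert {i : Fin n} (h : label X i = none) (e : Bool) :
    encode (insert (arrow i e) X) = (encode X).set i (some e) := by
  refine List.ext_getElem? fun j => ?_
  simp only [encode, List.getElem?_ofFn, List.getElem?_set, List.length_ofFn, label_insert h]
  by_cases hj : j < n
  · by_cases hij : i.val = j
    · simp [hj, hij, Fin.ext_iff]
    · simp [hj, hij, Fin.ext_iff, Ne.symm hij]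
  · simp [hj]; omega

lemma IsDecoration.insert_arrow (hX : IsDecoration (PathG (n + 1)) X) {i : Fin n}
    (h : label X i = none) (e : Bool) : IsDecoration (PathG (n + 1)) (insert (arrow i e) X) := by
  rw [label_eq_none_iff] at h
  refine ⟨fun q hq => ?_, fun q hq hq' => ?_⟩
  · rcases Finset.mem_insert.1 hq with rfl | hq
    · exact pathG_adj_iff_exists_arrow.2 ⟨i, e, rfl⟩
    · exact hX.1 q hq
  · rcases Finset.mem_insert.1 hq with rfl | hq <;> rcases Finset.mem_insert.1 hq' with hq' | hq'
    · simp [swap_arrow, arrow_inj] at hq'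
    · exact h _ (swap_arrow i e ▸ hq')
    · rw [← Prod.swap_swap q, hq', swap_arrow] at hq
      exact h _ hq
    · exact hX.2 q hq hq'

lemma isLeaf_pathG_iff (hn : 1 ≤ n) {v : Fin (n + 1)} :
    IsLeaf (PathG (n + 1)) v ↔ v.val = 0 ∨ v.val = n := by
  constructor
  · rintro ⟨w, -, hw⟩
    by_contra hv
    have h1 := hw ⟨v - 1, by omega⟩ (pathG_adj.2 (by simp; omega))
    have h2 := hw ⟨v + 1, by omega⟩ (pathG_adj.2 (by simp))
    have := congrArg Fin.val (h1.trans h2.symm)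
    simp at this
  · rintro (h | h)
    · refine ⟨⟨1, by omega⟩, pathG_adj.2 (by simp [h]), fun w hw => Fin.ext ?_⟩
      have := pathG_adj.1 hw
      simp
      omega
    · refine ⟨⟨n - 1, by omega⟩, pathG_adj.2 (by simp [h]; omega), fun w hw => Fin.ext ?_⟩
      have := pathG_adj.1 hw
      simp
      omega

lemma pathG_adj_succ_iff {i : ℕ} (hi : i + 1 < n) {u : Fin (n + 1)} :
    (PathG (n + 1)).Adj u ⟨i + 1, by omega⟩ ↔
      u = ⟨i, by omega⟩ ∨ u = ⟨i + 2, by omega⟩ := by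
  rw [pathG_adj, Fin.ext_iff, Fin.ext_iff]
  simp
  omega

lemma isSink_pathG_iff {i : ℕ} (hi : i + 1 < n) :
    IsSink (PathG (n + 1)) X ⟨i + 1, by omega⟩ ↔
      arrow ⟨i, by omega⟩ true ∈ X ∧ arrow ⟨i + 1, hi⟩ false ∈ X := by
  simp only [IsSink, pathG_adj_succ_iff hi, forall_eq_or_imp, forall_eq]
  rfl

lemma isSource_pathG_iff {i : ℕ} (hi : i + 1 < n) :
    IsSource (PathG (n + 1)) X ⟨i + 1, by omega⟩ ↔
      arrow ⟨i, by omega⟩ false ∈ X ∧ arrow ⟨i + 1, hi⟩ true ∈ X := by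
  simp only [IsSource, SimpleGraph.adj_comm (PathG (n + 1)) ⟨i + 1, by omega⟩,
    pathG_adj_succ_iff hi, forall_eq_or_imp, forall_eq]
  rfl

lemma agree_label_iff (hX : IsDecoration (PathG (n + 1)) X) (i j : Fin n) :
    Agree (label X i) (label X j) ↔
      ¬(arrow i true ∈ X ∧ arrow j false ∈ X) ∧
        ¬(arrow i false ∈ X ∧ arrow j true ∈ X) := by
  simp only [agree_iff, label_eq_some_iff hX]

theorem isState_iff_isChain (hn : 1 ≤ n) (hX : IsDecoration (PathG (n + 1)) X) :
    IsState (PathG (n + 1)) X ↔ (encode X).IsChain Agree := by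
  rw [encode, List.isChain_ofFn, IsState, and_iff_right hX]
  constructor
  · intro h i hi
    rw [agree_label_iff hX, ← isSink_pathG_iff hi, ← isSource_pathG_iff hi]
    exact h _ (by rw [isLeaf_pathG_iff hn]; simp; omega)
  · intro h v hv
    rw [isLeaf_pathG_iff hn, not_or] at hv
    obtain ⟨i, hi, rfl⟩ : ∃ i, ∃ hi : i + 1 < n, v = ⟨i + 1, by omega⟩ :=
      ⟨v.val - 1, by omega, Fin.ext (by simp; omega)⟩
    rw [isSink_pathG_iff hi, isSource_pathG_iff hi, ← agree_label_iff hX]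
    exact h i hi

lemma move_encode_of_follower {X' : Finset (Fin (n + 1) × Fin (n + 1))}
    (hF : Follower (PathG (n + 1)) X X') : Move (encode X) (encode X') := by
  obtain ⟨-, hX', p, hp, rfl⟩ := hF
  obtain ⟨i, e, rfl⟩ := pathG_adj_iff_exists_arrow.1 (hX'.1.1 p (Finset.mem_insert_self p X))
  have hswap : arrow i (!e) ∉ X := fun h => hX'.1.2 _ (Finset.mem_insert_self _ X)
    (swap_arrow i e ▸ Finset.mem_insert_of_mem h)
  have hnone : label X i = none := label_eq_none_iff.2 fun e' => by
    cases e <;> cases e' <;> assumption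
  rw [encode_insert hnone]
  exact Move.set_some (by rw [getElem?_encode, hnone]) e

lemma exists_follower_of_move (hn : 1 ≤ n) (hX : IsState (PathG (n + 1)) X) {l' : List Label}
    (hm : Move (encode X) l') (hl' : l'.IsChain Agree) :
    ∃ X', Follower (PathG (n + 1)) X X' ∧ encode X' = l' := by
  obtain ⟨j, e, hj, rfl⟩ := hm.exists_eq_set
  obtain ⟨hjn, -⟩ := List.getElem?_eq_some_iff.1 hj
  rw [encode, List.length_ofFn] at hjn
  have hnone : label X ⟨j, hjn⟩ = none := by simpa [getElem?_encode X ⟨j, hjn⟩] using hj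
  have henc := encode_insert hnone e
  refine ⟨insert (arrow ⟨j, hjn⟩ e) X, ⟨hX, ?_, arrow ⟨j, hjn⟩ e, ?_, rfl⟩, henc⟩
  · exact (isState_iff_isChain hn (IsDecoration.insert_arrow hX.1 hnone e)).2 (henc ▸ hl')
  · exact label_eq_none_iff.1 hnone e

end Path

theorem grundy_pathG {n : ℕ} (hn : 1 ≤ n) {X : Finset (Fin (n + 1) × Fin (n + 1))}
    (hX : IsState (PathG (n + 1)) X) : grundy (PathG (n + 1)) X = value none 0 (encode X) := by
  have hchain : ∀ {Y}, IsState (PathG (n + 1)) Y → (none :: encode Y).IsChain Agree :=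
    fun hY => by simpa [isChain_cons] using (isState_iff_isChain hn hY.1).1 hY
  refine grundy_eq_of_followers _ (fun Y => value none 0 (encode Y)) (fun X X' hF => ?_)
    (fun X hX v hv => ?_) hX
  · exact value_ne_of_move (move_encode_of_follower hF) none 0 (hchain hF.2.1)
  · obtain ⟨l', hm, hc, rfl⟩ := exists_move_value_eq (encode X) none 0 v (hchain hX) hv
    obtain ⟨X', hF, rfl⟩ := exists_follower_of_move hn hX hm (by simpa [isChain_cons] using hc)
    exact ⟨X', hF, rfl⟩

lemma encode_empty (n : ℕ) :
    encode (∅ : Finset (Fin (n + 1) × Fin (n + 1))) = replicate n none := by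
  have : label (∅ : Finset (Fin (n + 1) × Fin (n + 1))) = fun _ => none :=
    funext fun i => by simp [label]
  rw [encode, this, List.ofFn_const]

lemma value_replicate (n : ℕ) : value none 0 (replicate n none) = n % 2 := by
  rw [← append_nil (replicate n none), value_replicate_append, Nat.zero_add]
  rfl

end PathGame

/-- `g(R_n) = n̄` for every `n ≥ 1`, where the `n`-rod `R_n` is the empty state of
the path graph with vertices `0, 1, …, n`. -/
theorem grundy_rod (n : ℕ) (hn : 1 ≤ n) :
    grundy (PathG (n + 1)) (∅ : Finset (Fin (n + 1) × Fin (n + 1))) = n % 2 := by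
  have hempty : IsState (PathG (n + 1)) (∅ : Finset (Fin (n + 1) × Fin (n + 1))) :=
    (PathGame.isState_iff_isChain hn ⟨by simp, by simp⟩).2 <| by
      rw [PathGame.encode_empty]
      exact List.isChain_replicate_of_rel n trivial
  rw [PathGame.grundy_pathG hn hempty, PathGame.encode_empty, PathGame.value_replicate]
end

section
/- For every integer n ≥ 0, the n-flow F_n and the (n+1)-crash C_{n+1} are both p(n)-moves states. -/
/-- A terminal state: a state with no followers. -/
def Terminal {V : Type*} [DecidableEq V] (G : SimpleGraph V)
    (X : Finset (V × V)) : Prop :=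
  IsState G X ∧ ∀ X', ¬ Follower G X X'

/-- A `p(n)`-moves state: a state `X` such that every terminal descendent `X*` of
`X` satisfies `|X* \ X| ≡ n (mod 2)`. -/
def PMovesState {V : Type*} [DecidableEq V] (G : SimpleGraph V)
    (X : Finset (V × V)) (n : ℕ) : Prop :=
  IsState G X ∧ ∀ X', Relation.TransGen (Follower G) X X' → Terminal G X' →
    (X' \ X).card % 2 = n % 2

/-!
On a path, record a decoration by the direction `1`, `-1` or `0` (unmarked) of each edge. A
decoration is a state exactly when no two adjacent edges point in opposite directions. In a
terminal state, each of the two orientations of an unmarked edge is blocked, so that edge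
sits between two marked edges of opposite directions: walking along the path, the direction
flips exactly at the unmarked edges. When both end edges are marked, the product of their
directions is `(-1) ^ u`, where `u` is the number of edges minus `|X*|` for the terminal
descendant `X*`. Both end arrows of `F_n` and `C_(n+1)` are present from the start,
so this fixes the parity of `|X*|`: the end arrows of `F_n` agree and leave `n + 2` edges, those
of `C_(n+1)` disagree and leave `n + 3`, and in both cases `|X* \ X| = |X*| - 2 ≡ n`.
-/

theorem IsDecoration.insert {V : Type*} [DecidableEq V] {G : SimpleGraph V}
    {X : Finset (V × V)} (hX : IsDecoration G X) {a b : V} (hab : G.Adj a b)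
    (hba : (b, a) ∉ X) : IsDecoration G (insert (a, b) X) := by
  refine ⟨fun p hp => ?_, fun p hp hswap => ?_⟩
  · rcases Finset.mem_insert.mp hp with rfl | hp
    exacts [hab, hX.1 p hp]
  · rcases Finset.mem_insert.mp hp with rfl | hp <;>
      rcases Finset.mem_insert.mp hswap with hswap | hswap
    · exact hab.ne (congrArg Prod.snd hswap)
    · exact hba hswap
    · rw [← Prod.swap_swap p, hswap] at hp
      exact hba hp
    · exact hX.2 p hp hswap

theorem subset_of_transGen_follower {V : Type*} [DecidableEq V] {G : SimpleGraph V}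
    {X Y : Finset (V × V)} (h : Relation.TransGen (Follower G) X Y) : X ⊆ Y := by
  induction h with
  | single h => obtain ⟨-, -, p, -, rfl⟩ := h; exact Finset.subset_insert _ _
  | tail _ h ih => obtain ⟨-, -, p, -, rfl⟩ := h; exact ih.trans (Finset.subset_insert _ _)

section PathG

variable {m : ℕ} {X Y : Finset (Fin m × Fin m)} {i : ℕ}

theorem pathG_adj_iff {a b : Fin m} :
    (PathG m).Adj a b ↔ a.val + 1 = b.val ∨ b.val + 1 = a.val := by
  rw [PathG, SimpleGraph.fromRel_adj]
  exact ⟨And.right, fun h => ⟨by rintro rfl; omega, h⟩⟩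

theorem isLeaf_pathG_iff (hm : 2 ≤ m) (v : Fin m) :
    IsLeaf (PathG m) v ↔ v.val = 0 ∨ v.val + 1 = m := by
  simp only [IsLeaf, pathG_adj_iff]
  constructor
  · rintro ⟨w, -, hw⟩
    by_contra! h
    have hlo := hw ⟨v - 1, by omega⟩ (by simp; omega)
    have hhi := hw ⟨v + 1, by omega⟩ (by simp)
    rw [← hhi, Fin.mk.injEq] at hlo
    omega
  · rintro (h | h)
    · exact ⟨⟨1, by omega⟩, by simp [h], fun w hw => Fin.ext (by simp; omega)⟩
    · exact ⟨⟨v - 1, by omega⟩, by simp; omega, fun w hw => Fin.ext (by simp; omega)⟩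

theorem forall_adj_pathG_iff (hi : i + 2 < m) {P : Fin m → Prop} :
    (∀ u, (PathG m).Adj u ⟨i + 1, by omega⟩ → P u) ↔ P ⟨i, by omega⟩ ∧ P ⟨i + 2, hi⟩ := by
  simp only [pathG_adj_iff]
  refine ⟨fun h => ⟨h _ (by simp), h _ (by simp)⟩, fun ⟨hlo, hhi⟩ u hu => ?_⟩
  obtain rfl | rfl : u = ⟨i, by omega⟩ ∨ u = ⟨i + 2, hi⟩ := by
    simp only [Fin.ext_iff]; omega
  exacts [hlo, hhi]

/-- Reading endpoints as natural numbers keeps the arithmetic along the path free of `Fin`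
bounds. -/
def natArrows (X : Finset (Fin m × Fin m)) : Finset (ℕ × ℕ) :=
  X.map (Fin.valEmbedding.prodMap Fin.valEmbedding)

theorem val_mem_natArrows {a b : Fin m} :
    ((a : ℕ), (b : ℕ)) ∈ natArrows X ↔ (a, b) ∈ X :=
  Finset.mem_map' (a := (a, b)) (Fin.valEmbedding.prodMap Fin.valEmbedding)

theorem mem_natArrows {a b : ℕ} :
    (a, b) ∈ natArrows X ↔ ∃ (ha : a < m) (hb : b < m), (⟨a, ha⟩, ⟨b, hb⟩) ∈ X := by
  constructor
  · intro h
    obtain ⟨⟨x, y⟩, hxy, he⟩ := Finset.mem_map.mp h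
    obtain ⟨rfl, rfl⟩ := Prod.mk.inj he
    exact ⟨x.2, y.2, hxy⟩
  · rintro ⟨ha, hb, hab⟩
    exact val_mem_natArrows.mpr hab

theorem natArrows_insert (X : Finset (Fin m × Fin m)) (a b : Fin m) :
    natArrows (insert (a, b) X) = insert ((a : ℕ), (b : ℕ)) (natArrows X) :=
  Finset.map_insert _ _ _

theorem natArrows_mono (h : X ⊆ Y) : natArrows X ⊆ natArrows Y :=
  Finset.map_subset_map.mpr h

theorem IsDecoration.swap_notMem_natArrows (hX : IsDecoration (PathG m) X) {a b : ℕ}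
    (h : (a, b) ∈ natArrows X) : (b, a) ∉ natArrows X := by
  obtain ⟨_, _, hab⟩ := mem_natArrows.mp h
  rw [mem_natArrows]
  rintro ⟨_, _, hba⟩
  exact hX.2 _ hab hba

theorem IsDecoration.adj_of_mem_natArrows (hX : IsDecoration (PathG m) X) {a b : ℕ}
    (h : (a, b) ∈ natArrows X) : a + 1 = b ∨ b + 1 = a := by
  obtain ⟨_, _, hab⟩ := mem_natArrows.mp h
  exact pathG_adj_iff.mp (hX.1 _ hab)

/-- The direction of the edge `{i, i+1}`: `1` if it carries the arrow `(i, i+1)`,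
`-1` if it carries `(i+1, i)`, and `0` if it is unmarked (or not an edge at all). -/
def edgeDir (X : Finset (Fin m × Fin m)) (i : ℕ) : ℤ :=
  if (i, i + 1) ∈ natArrows X then 1 else if (i + 1, i) ∈ natArrows X then -1 else 0

theorem edgeDir_eq_one_iff : edgeDir X i = 1 ↔ (i, i + 1) ∈ natArrows X := by
  unfold edgeDir; split_ifs <;> simp_all

theorem edgeDir_eq_zero_iff :
    edgeDir X i = 0 ↔ (i, i + 1) ∉ natArrows X ∧ (i + 1, i) ∉ natArrows X := by
  unfold edgeDir; split_ifs <;> simp_all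

theorem IsDecoration.edgeDir_eq_neg_one_iff (hX : IsDecoration (PathG m) X) :
    edgeDir X i = -1 ↔ (i + 1, i) ∈ natArrows X := by
  unfold edgeDir
  split_ifs with h1 h2
  · simpa using hX.swap_notMem_natArrows h1
  · simpa
  · simpa

theorem edgeDir_trichotomy (X : Finset (Fin m × Fin m)) (i : ℕ) :
    edgeDir X i = 1 ∨ edgeDir X i = -1 ∨ edgeDir X i = 0 := by
  unfold edgeDir; split_ifs <;> simp

theorem mem_natArrows_of_edgeDir_eq_neg_one (h : edgeDir X i = -1) :
    (i + 1, i) ∈ natArrows X := by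
  unfold edgeDir at h
  split_ifs at h with h1 h2
  exact h2

theorem lt_of_edgeDir_ne_zero (h : edgeDir X i ≠ 0) : i + 1 < m := by
  by_contra hm
  refine h (edgeDir_eq_zero_iff.mpr ⟨fun hx => ?_, fun hx => ?_⟩)
  · obtain ⟨-, hb, -⟩ := mem_natArrows.mp hx; omega
  · obtain ⟨ha, -, -⟩ := mem_natArrows.mp hx; omega

theorem IsDecoration.isSink_pathG_iff (hX : IsDecoration (PathG m) X) (hi : i + 2 < m) :
    IsSink (PathG m) X ⟨i + 1, by omega⟩ ↔ edgeDir X i = 1 ∧ edgeDir X (i + 1) = -1 := by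
  rw [IsSink, forall_adj_pathG_iff hi, edgeDir_eq_one_iff, hX.edgeDir_eq_neg_one_iff,
    ← val_mem_natArrows, ← val_mem_natArrows]

theorem IsDecoration.isSource_pathG_iff (hX : IsDecoration (PathG m) X) (hi : i + 2 < m) :
    IsSource (PathG m) X ⟨i + 1, by omega⟩ ↔ edgeDir X i = -1 ∧ edgeDir X (i + 1) = 1 := by
  rw [IsSource, forall_congr' fun w => by rw [(PathG m).adj_comm], forall_adj_pathG_iff hi,
    edgeDir_eq_one_iff, hX.edgeDir_eq_neg_one_iff, ← val_mem_natArrows, ← val_mem_natArrows]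

theorem isState_pathG_iff (hm : 2 ≤ m) (hX : IsDecoration (PathG m) X) :
    IsState (PathG m) X ↔ ∀ i, i + 2 < m → edgeDir X i * edgeDir X (i + 1) ≠ -1 := by
  have sign_cases : ∀ i, (¬(edgeDir X i = 1 ∧ edgeDir X (i + 1) = -1) ∧
      ¬(edgeDir X i = -1 ∧ edgeDir X (i + 1) = 1)) ↔ edgeDir X i * edgeDir X (i + 1) ≠ -1 := by
    intro i
    rcases edgeDir_trichotomy X i with h | h | h <;>
      rcases edgeDir_trichotomy X (i + 1) with h' | h' | h' <;> simp [h, h']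
  simp only [IsState, hX, true_and, isLeaf_pathG_iff hm]
  constructor
  · intro h i hi
    rw [← sign_cases, ← hX.isSink_pathG_iff hi, ← hX.isSource_pathG_iff hi]
    exact h _ (by simp; omega)
  · intro h v hv
    obtain ⟨i, hi, rfl⟩ : ∃ i, ∃ hi : i + 2 < m, v = ⟨i + 1, by omega⟩ :=
      ⟨v - 1, by omega, Fin.ext (by simp; omega)⟩
    rw [hX.isSink_pathG_iff hi, hX.isSource_pathG_iff hi, sign_cases]
    exact h i hi

theorem edgeDir_insert_forward (hi : i + 1 < m) (j : ℕ) :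
    edgeDir (insert (⟨i, by omega⟩, ⟨i + 1, hi⟩) X) j = if j = i then 1 else edgeDir X j := by
  simp only [edgeDir, natArrows_insert, Finset.mem_insert, Prod.mk.injEq]
  split_ifs <;> grind

theorem edgeDir_insert_backward (hi : i + 1 < m) (h0 : edgeDir X i = 0) (j : ℕ) :
    edgeDir (insert (⟨i + 1, hi⟩, ⟨i, by omega⟩) X) j = if j = i then -1 else edgeDir X j := by
  rw [edgeDir_eq_zero_iff] at h0
  simp only [edgeDir, natArrows_insert, Finset.mem_insert, Prod.mk.injEq]
  split_ifs <;> grind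

theorem edgeDir_eq_of_subset (hY : IsDecoration (PathG m) Y) (hXY : X ⊆ Y)
    (h : edgeDir X i ≠ 0) :
    edgeDir Y i = edgeDir X i := by
  have hsub := natArrows_mono hXY
  rcases edgeDir_trichotomy X i with h1 | h1 | h1
  · rw [h1, edgeDir_eq_one_iff]
    exact hsub (edgeDir_eq_one_iff.mp h1)
  · rw [h1, hY.edgeDir_eq_neg_one_iff]
    exact hsub (mem_natArrows_of_edgeDir_eq_neg_one h1)
  · exact absurd h1 h

end PathG

section Terminal

variable {m : ℕ} {X : Finset (Fin m × Fin m)} {i : ℕ}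

/-- Redirecting the edge `{i+1, i+2}` of a terminal state to `s` creates a sink or a source,
which must sit at one of its endpoints. -/
theorem Terminal.neighbor_opposes_of_insert (hT : Terminal (PathG m) X) (hm : 2 ≤ m)
    {p : Fin m × Fin m} (hp : p ∉ X) (hdec : IsDecoration (PathG m) (insert p X)) {s : ℤ}
    (hdir : ∀ j, edgeDir (insert p X) j = if j = i + 1 then s else edgeDir X j) :
    edgeDir X i * s = -1 ∨ s * edgeDir X (i + 2) = -1 := by
  have hX := (isState_pathG_iff hm hT.1.1).mp hT.1
  have hnot : ¬ IsState (PathG m) (insert p X) := fun h => hT.2 _ ⟨hT.1, h, p, hp, rfl⟩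
  rw [isState_pathG_iff hm hdec] at hnot
  push Not at hnot
  obtain ⟨j, hj, hprod⟩ := hnot
  rw [hdir, hdir] at hprod
  split_ifs at hprod with h1 h2 h2
  · omega
  · subst h1; exact Or.inr hprod
  · obtain rfl : j = i := by omega
    exact Or.inl hprod
  · exact absurd hprod (hX j hj)

theorem Terminal.edgeDir_mul_edgeDir_eq_neg_one_of_unmarked (hT : Terminal (PathG m) X)
    (hi : i + 2 < m) (h0 : edgeDir X (i + 1) = 0) : edgeDir X i * edgeDir X (i + 2) = -1 := by
  have hdec := hT.1.1
  obtain ⟨hf, hb⟩ := edgeDir_eq_zero_iff.mp h0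
  have hfX : (⟨i + 1, by omega⟩, ⟨i + 2, hi⟩) ∉ X := fun h => hf (val_mem_natArrows.mpr h)
  have hbX : (⟨i + 2, hi⟩, ⟨i + 1, by omega⟩) ∉ X := fun h => hb (val_mem_natArrows.mpr h)
  have hadj : (PathG m).Adj ⟨i + 1, by omega⟩ ⟨i + 2, hi⟩ := pathG_adj_iff.mpr (by simp)
  have fwd := hT.neighbor_opposes_of_insert (by omega) hfX (hdec.insert hadj hbX)
    (edgeDir_insert_forward hi)
  have bwd := hT.neighbor_opposes_of_insert (by omega) hbX (hdec.insert hadj.symm hfX)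
    (edgeDir_insert_backward hi h0)
  rcases edgeDir_trichotomy X i with h | h | h <;>
    rcases edgeDir_trichotomy X (i + 2) with h' | h' | h' <;> simp_all

def numUnmarked (X : Finset (Fin m × Fin m)) (k : ℕ) : ℕ :=
  ((Finset.range k).filter (edgeDir X · = 0)).card

theorem numUnmarked_zero : numUnmarked X 0 = 0 := rfl

theorem numUnmarked_succ (k : ℕ) :
    numUnmarked X (k + 1) = numUnmarked X k + if edgeDir X k = 0 then 1 else 0 := by
  simp only [numUnmarked, Finset.card_filter, Finset.sum_range_succ]

theorem IsDecoration.card_eq_card_marked (hX : IsDecoration (PathG m) X) :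
    X.card = ((Finset.range (m - 1)).filter (edgeDir X · ≠ 0)).card := by
  rw [← Finset.card_map (Fin.valEmbedding.prodMap Fin.valEmbedding)]
  refine Finset.card_nbij (fun p => min p.1 p.2) ?_ ?_ ?_
  · rintro ⟨a, b⟩ hp
    obtain ⟨ha, hb, -⟩ := mem_natArrows.mp hp
    simp only [Finset.coe_filter, Finset.mem_range, Set.mem_ofPred_eq]
    rcases hX.adj_of_mem_natArrows hp with rfl | rfl
    · refine ⟨by omega, ?_⟩
      rw [min_eq_left (by omega), (edgeDir_eq_one_iff).mpr hp]
      simp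
    · refine ⟨by omega, ?_⟩
      rw [min_eq_right (by omega), (hX.edgeDir_eq_neg_one_iff).mpr hp]
      simp
  · rintro ⟨a, b⟩ hp ⟨c, d⟩ hq hmin
    simp only [Finset.mem_coe] at hp hq
    have hp' := hX.swap_notMem_natArrows hp
    simp only [Prod.mk.injEq] at hmin ⊢
    rcases hX.adj_of_mem_natArrows hp with rfl | rfl <;>
      rcases hX.adj_of_mem_natArrows hq with rfl | rfl
    · omega
    · obtain rfl : a = d := by omega
      exact absurd hq hp'
    · obtain rfl : b = c := by omega
      exact absurd hq hp'
    · omega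
  · intro j hj
    simp only [Finset.coe_filter, Finset.mem_range, Set.mem_ofPred_eq, ne_eq,
      edgeDir_eq_zero_iff, not_and_or, not_not] at hj
    rcases hj.2 with h | h
    exacts [⟨_, h, by simp⟩, ⟨_, h, by simp⟩]

theorem IsDecoration.card_add_numUnmarked (hX : IsDecoration (PathG m) X) :
    X.card + numUnmarked X (m - 1) = m - 1 := by
  rw [hX.card_eq_card_marked, numUnmarked, add_comm,
    Finset.card_filter_add_card_filter_not, Finset.card_range]

/-- Along a terminal state the direction is kept across each pair of adjacent marked edges
and reversed across each unmarked edge. -/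
theorem Terminal.edgeDir_eq_mul_neg_one_pow (hT : Terminal (PathG m) X)
    (h0 : edgeDir X 0 ≠ 0) (k : ℕ) (hk : k + 1 < m) (hne : edgeDir X k ≠ 0) :
    edgeDir X k = edgeDir X 0 * (-1) ^ numUnmarked X k := by
  have hm : 2 ≤ m := by omega
  have hX := (isState_pathG_iff hm hT.1.1).mp hT.1
  induction k using Nat.strong_induction_on with
  | _ k ih =>
  rcases k with _ | k
  · simp [numUnmarked_zero]
  by_cases hzero : edgeDir X k = 0
  · obtain ⟨j, rfl⟩ : ∃ j, k = j + 1 :=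
      Nat.exists_eq_succ_of_ne_zero (by rintro rfl; exact h0 hzero)
    have hflip := hT.edgeDir_mul_edgeDir_eq_neg_one_of_unmarked (i := j) (by omega) hzero
    have hj : edgeDir X j ≠ 0 := by rintro h; simp [h] at hflip
    rw [numUnmarked_succ, numUnmarked_succ, if_pos hzero, if_neg hj, add_zero, pow_succ,
      ← mul_assoc, ← ih j (by omega) (by omega) hj]
    rcases edgeDir_trichotomy X j with h | h | h <;>
      rcases edgeDir_trichotomy X (j + 2) with h' | h' | h' <;> simp_all
  · have hagree := hX k (by omega)
    rw [numUnmarked_succ, if_neg hzero, add_zero, ← ih k (by omega) (by omega) hzero]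
    rcases edgeDir_trichotomy X k with h | h | h <;>
      rcases edgeDir_trichotomy X (k + 1) with h' | h' | h' <;> simp_all

theorem Terminal.edgeDir_last (hT : Terminal (PathG m) X) (h0 : edgeDir X 0 ≠ 0)
    (hl : edgeDir X (m - 2) ≠ 0) :
    edgeDir X (m - 2) = edgeDir X 0 * (-1) ^ (m - 1 - X.card) := by
  have hm := lt_of_edgeDir_ne_zero h0
  have hcount := hT.1.1.card_add_numUnmarked
  obtain ⟨k, rfl⟩ : ∃ k, m = k + 2 := ⟨m - 2, by omega⟩
  rw [Nat.add_sub_cancel] at hl ⊢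
  rw [show k + 2 - 1 = k + 1 by omega, numUnmarked_succ, if_neg hl] at hcount
  rw [show k + 2 - 1 - X.card = numUnmarked X k by omega]
  exact hT.edgeDir_eq_mul_neg_one_pow h0 k (by omega) hl

end Terminal

theorem mod_two_eq_of_neg_one_pow_eq {a b : ℕ} (h : (-1 : ℤ) ^ a = (-1) ^ b) :
    a % 2 = b % 2 := by
  rw [neg_one_pow_eq_pow_mod_two, neg_one_pow_eq_pow_mod_two (n := b)] at h
  rcases Nat.mod_two_eq_zero_or_one a with ha | ha <;>
    rcases Nat.mod_two_eq_zero_or_one b with hb | hb <;> simp_all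

theorem pMovesState_pathG {m n : ℕ} {Y : Finset (Fin m × Fin m)} (hY : IsState (PathG m) Y)
    (h0 : edgeDir Y 0 ≠ 0)
    (hl : edgeDir Y (m - 2) = edgeDir Y 0 * (-1) ^ (m + 1 + Y.card + n)) :
    PMovesState (PathG m) Y n := by
  refine ⟨hY, fun X hYX hX => ?_⟩
  have hsub := subset_of_transGen_follower hYX
  have hl0 : edgeDir Y (m - 2) ≠ 0 := by rw [hl]; simp [h0]
  have e0 := edgeDir_eq_of_subset hX.1.1 hsub h0
  have el := edgeDir_eq_of_subset hX.1.1 hsub hl0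
  have hlast := hX.edgeDir_last (e0 ▸ h0) (el ▸ hl0)
  rw [e0, el, hl] at hlast
  have hpar := mod_two_eq_of_neg_one_pow_eq (mul_left_cancel₀ h0 hlast)
  have hcount := hX.1.1.card_add_numUnmarked
  have hle := Finset.card_le_card hsub
  have hm := lt_of_edgeDir_ne_zero h0
  rw [Finset.card_sdiff_of_subset hsub]
  omega

theorem natArrows_flowState (n : ℕ) : natArrows (flowState n) = {(0, 1), (n + 1, n + 2)} := by
  simp [natArrows, flowState]

theorem natArrows_crashState (n : ℕ) :
    natArrows (crashState n) = {(0, 1), (n + 2, n + 1)} := by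
  simp [natArrows, crashState]

theorem edgeDir_flowState (n i : ℕ) :
    edgeDir (flowState n) i = if i = 0 ∨ i = n + 1 then 1 else 0 := by
  simp only [edgeDir, natArrows_flowState, Finset.mem_insert, Finset.mem_singleton, Prod.mk.injEq]
  split_ifs <;> grind

theorem edgeDir_crashState (n i : ℕ) :
    edgeDir (crashState (n + 1)) i = if i = 0 then 1 else if i = n + 2 then -1 else 0 := by
  simp only [edgeDir, natArrows_crashState, Finset.mem_insert, Finset.mem_singleton,
    Prod.mk.injEq]
  split_ifs <;> grind

theorem isDecoration_flowState (n : ℕ) : IsDecoration (PathG (n + 3)) (flowState n) := by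
  simp [IsDecoration, flowState, pathG_adj_iff]

theorem isDecoration_crashState (n : ℕ) : IsDecoration (PathG (n + 3)) (crashState n) := by
  simp [IsDecoration, crashState, pathG_adj_iff]

theorem isState_flowState (n : ℕ) : IsState (PathG (n + 3)) (flowState n) := by
  refine (isState_pathG_iff (by omega) (isDecoration_flowState n)).mpr fun i _ => ?_
  simp only [edgeDir_flowState]
  split_ifs <;> norm_num

theorem isState_crashState (n : ℕ) : IsState (PathG (n + 4)) (crashState (n + 1)) := by
  refine (isState_pathG_iff (by omega) (isDecoration_crashState (n + 1))).mpr fun i _ => ?_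
  simp only [edgeDir_crashState]
  split_ifs <;> omega

/-- For every `n ≥ 0`, the `n`-flow `F_n` and the `(n+1)`-crash `C_{n+1}` are
`p(n)`-moves states. -/
theorem flow_crash_pMoves (n : ℕ) :
    PMovesState (PathG (n + 3)) (flowState n) n ∧
    PMovesState (PathG (n + 4)) (crashState (n + 1)) n := by
  have card_flow : (flowState n).card = 2 := by simp [flowState]
  have card_crash : (crashState (n + 1)).card = 2 := by simp [crashState]
  constructor
  · refine pMovesState_pathG (isState_flowState n) (by simp [edgeDir_flowState]) ?_
    rw [card_flow, show n + 3 - 2 = n + 1 by omega, Even.neg_one_pow ⟨n + 3, by ring⟩]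
    simp [edgeDir_flowState]
  · refine pMovesState_pathG (isState_crashState n) (by simp [edgeDir_crashState]) ?_
    rw [card_crash, show n + 4 - 2 = n + 2 by omega, Odd.neg_one_pow ⟨n + 3, by ring⟩]
    simp [edgeDir_crashState]
end
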